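/- arXiv:1908.06384 — 6 statements merged into one kernel-verified Lean document; each statement's English description precedes it below -/
import Mathlib

section
/- Let r>0 and ℓ>0, let B denote the closed disk {k ∈ ℂ : |k| ≤ r}, and for n ∈ ℤ set a_n := πn/(2ℓ). Suppose F : ℂ → ℂ is holomorphic on B, satisfies |F(k) − 1| < 1 − e^{−π/2} for all k ∈ B, and satisfies the contraction condition (e^{π/2}/(4ℓ))·max_{k∈B}|F′(k)| < 1. Then for every integer n with |n| ≤ ⌊2ℓr/π − 1/2⌋, there exists exactly one k in the closed disk {k ∈ ℂ : |k − a_n| ≤ π/(4ℓ)} satisfying e^{4ikℓ} = F(k). -/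
/-!
Put `A = a_n` and `R = π/(4ℓ)`; the disk `closedBall A R` lies in `B`. Since `e^{4iAℓ} = 1` and
`‖log F‖ < π/2` on `B`, a solution `k` of `e^{4ikℓ} = F(k)` in that disk satisfies
`4iℓ(k - A) = log F(k)` exactly (the two sides differ by less than `2π`), i.e. it is a fixed point
of `Φ(k) = A + log F(k) / (4iℓ)`. This holomorphic map sends the disk into the concentric disk of
half the radius, and such a map has exactly one fixed point: by compactness it even lands in a
disk of radius `M < R/2`, on which Cauchy's estimate bounds `‖Φ'‖` by `M/(R - M) < 1`, so `Φ` is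
a contraction of `closedBall A M` and Banach's fixed point theorem applies.
-/

open Metric Set

namespace Complex

theorem norm_log_le_neg_log_one_sub {w : ℂ} (hw : ‖w - 1‖ < 1) :
    ‖log w‖ ≤ -Real.log (1 - ‖w - 1‖) := by
  set z := w - 1
  have hterm : ∀ n : ℕ, ‖(-1 : ℂ) ^ (n + 1) * z ^ n / n‖ = ‖z‖ ^ n / n := fun n => by simp
  have hreal : HasSum (fun n : ℕ => ‖z‖ ^ n / n) (-Real.log (1 - ‖z‖)) := by
    have h := Real.hasSum_pow_div_log_of_abs_lt_one (abs_lt.2 ⟨by linarith [norm_nonneg z], hw⟩)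
    rw [← hasSum_nat_add_iff' 1]
    simpa [abs_of_nonneg (norm_nonneg z)] using h
  have hseries := hasSum_taylorSeries_log hw
  rw [add_sub_cancel] at hseries
  rw [← hseries.tsum_eq, ← hreal.tsum_eq, ← funext hterm]
  exact norm_tsum_le_tsum_norm (by simpa only [hterm] using hreal.summable)

theorem norm_log_lt_of_norm_sub_one_lt {w : ℂ} {c : ℝ} (hw : ‖w - 1‖ < 1 - Real.exp (-c)) :
    ‖log w‖ < c := by
  have hexp : Real.exp (-c) < 1 - ‖w - 1‖ := by linarith
  have hlog : -c < Real.log (1 - ‖w - 1‖) := by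
    simpa using Real.log_lt_log (Real.exp_pos _) hexp
  linarith [norm_log_le_neg_log_one_sub (by linarith [Real.exp_pos (-c)] : ‖w - 1‖ < 1)]

theorem exp_eq_exp_iff_of_norm_sub_lt {z w : ℂ} (h : ‖z - w‖ < 2 * Real.pi) :
    exp z = exp w ↔ z = w := by
  refine ⟨fun hzw => ?_, congrArg exp⟩
  obtain ⟨n, hn⟩ := exp_eq_exp_iff_exists_int.1 hzw
  have hnorm : ‖z - w‖ = |(n : ℝ)| * (2 * Real.pi) := by
    rw [hn, add_sub_cancel_left, norm_mul, norm_mul, norm_mul, norm_I, norm_real,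
      Real.norm_of_nonneg Real.pi_pos.le, norm_intCast]
    norm_num
  have hn0 : n = 0 := Int.abs_lt_one_iff.1 (by exact_mod_cast (by nlinarith [Real.pi_pos] :
    |(n : ℝ)| < 1))
  simpa [hn0] using hn

theorem norm_deriv_le_of_forall_dist_le {f : ℂ → ℂ} {c z : ℂ} {R ρ M : ℝ}
    (hf : DifferentiableOn ℂ f (closedBall c R)) (hM : ∀ w ∈ closedBall c R, dist (f w) c ≤ M)
    (hρ : ρ < R) (hz : z ∈ closedBall c ρ) : ‖deriv f z‖ ≤ M / (R - ρ) := by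
  have hsub : closedBall z (R - ρ) ⊆ closedBall c R := closedBall_subset_closedBall' (by
    rw [mem_closedBall] at hz; linarith)
  rw [← deriv_sub_const c]
  refine norm_deriv_le_of_forall_mem_sphere_norm_le (sub_pos.2 hρ) ?_ fun w hw => ?_
  · refine ((hf.mono ?_).sub_const c).diffContOnCl
    rwa [closure_ball z (sub_pos.2 hρ).ne']
  · rw [← dist_eq_norm]
    exact hM w (hsub (sphere_subset_closedBall hw))

theorem existsUnique_fixedPt_of_forall_dist_lt_half {f : ℂ → ℂ} {c : ℂ} {R : ℝ} (hR : 0 < R)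
    (hf : DifferentiableOn ℂ f (closedBall c R))
    (hfR : ∀ z ∈ closedBall c R, dist (f z) c < R / 2) :
    ∃! z, z ∈ closedBall c R ∧ f z = z := by
  obtain ⟨z₀, hz₀, hmax⟩ := (isCompact_closedBall c R).exists_isMaxOn
    (f := fun z => dist (f z) c) (nonempty_closedBall.2 hR.le)
    ((continuous_id.dist continuous_const).comp_continuousOn hf.continuousOn)
  set M := dist (f z₀) c
  have hbound : ∀ z ∈ closedBall c R, dist (f z) c ≤ M := fun z hz => hmax hz
  have hM : M < R / 2 := hfR z₀ hz₀
  have hM0 : 0 ≤ M := dist_nonneg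
  have hMR : closedBall c M ⊆ closedBall c R := closedBall_subset_closedBall (by linarith)
  have hmaps : MapsTo f (closedBall c M) (closedBall c M) := fun z hz => hbound z (hMR hz)
  set K : NNReal := ⟨M / (R - M), div_nonneg hM0 (by linarith)⟩
  have hK : K < 1 := by
    rw [← NNReal.coe_lt_coe]
    change M / (R - M) < 1
    rw [div_lt_one (by linarith)]
    linarith
  have hlip : LipschitzOnWith K f (closedBall c M) := by
    refine (convex_closedBall c M).lipschitzOnWith_of_nnnorm_deriv_le (fun z hz => ?_)
      fun z hz => norm_deriv_le_of_forall_dist_le hf hbound (by linarith) hz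
    refine hf.differentiableAt (closedBall_mem_nhds_of_mem ?_)
    rw [mem_closedBall] at hz
    exact mem_ball.2 (by linarith)
  obtain ⟨z, hz, hfix, -⟩ := ContractingWith.exists_fixedPoint' isClosed_closedBall.isComplete
    hmaps ⟨hK, hlip.mapsToRestrict hmaps⟩ (mem_closedBall_self hM0) (edist_ne_top _ _)
  refine ⟨z, ⟨hMR hz, hfix⟩, fun w ⟨hw, hwfix⟩ => ?_⟩
  have hwM : w ∈ closedBall c M := by
    rw [mem_closedBall, ← hwfix]; exact hbound w hw
  have hcontr := hlip.dist_le_mul w hwM z hz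
  rw [hwfix, hfix] at hcontr
  have hK' : (K : ℝ) < 1 := hK
  exact dist_eq_zero.1 (by nlinarith [dist_nonneg (x := w) (y := z)])

end Complex

open Complex

theorem closedBall_subset_closedBall_zero_of_abs_le_floor {r ℓ : ℝ} (hℓ : 0 < ℓ) {n : ℤ}
    (hn : |n| ≤ ⌊2 * ℓ * r / Real.pi - 1 / 2⌋) :
    closedBall ((Real.pi * n / (2 * ℓ) : ℝ) : ℂ) (Real.pi / (4 * ℓ)) ⊆ closedBall 0 r := by
  have hπ := Real.pi_pos
  have hn' : ((|n| : ℤ) : ℝ) + 1 / 2 ≤ 2 * ℓ * r / Real.pi := by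
    linarith [(Int.le_floor.1 hn : ((|n| : ℤ) : ℝ) ≤ _)]
  rw [Int.cast_abs, le_div_iff₀ hπ] at hn'
  refine closedBall_subset_closedBall' ?_
  rw [dist_zero_right, norm_real, Real.norm_eq_abs, abs_div, abs_mul, abs_of_pos hπ,
    abs_of_pos (by positivity : (0 : ℝ) < 2 * ℓ), div_add_div _ _ (by positivity) (by positivity),
    div_le_iff₀ (by positivity)]
  nlinarith

theorem exp_four_I_mul_eq_iff_of_mem_closedBall {ℓ : ℝ} (hℓ : 0 < ℓ) (n : ℤ) {k w : ℂ}
    (hk : k ∈ closedBall ((Real.pi * n / (2 * ℓ) : ℝ) : ℂ) (Real.pi / (4 * ℓ))) (hw : w ≠ 0)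
    (hlog : ‖log w‖ < Real.pi) :
    exp (4 * I * k * ℓ) = w ↔
      ((Real.pi * n / (2 * ℓ) : ℝ) : ℂ) + log w / (4 * I * ℓ) = k := by
  set A : ℂ := ((Real.pi * n / (2 * ℓ) : ℝ) : ℂ)
  have hℓ' : (ℓ : ℂ) ≠ 0 := ofReal_ne_zero.2 hℓ.ne'
  have hperiod : 4 * I * k * ℓ = 4 * I * ℓ * (k - A) + n * (2 * Real.pi * I) := by
    simp only [A]
    push_cast
    field_simp
    ring
  have hnorm : ‖4 * I * ℓ * (k - A)‖ ≤ Real.pi := by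
    rw [mem_closedBall, dist_eq_norm, le_div_iff₀ (by positivity)] at hk
    simpa [abs_of_pos hℓ, mul_comm] using hk
  calc exp (4 * I * k * ℓ) = w
      ↔ exp (4 * I * ℓ * (k - A)) = exp (log w) := by
        rw [hperiod, exp_periodic.int_mul n, exp_log hw]
    _ ↔ 4 * I * ℓ * (k - A) = log w :=
        exp_eq_exp_iff_of_norm_sub_lt ((norm_sub_le _ _).trans_lt (by linarith))
    _ ↔ A + log w / (4 * I * ℓ) = k := by
        rw [add_comm, ← eq_sub_iff_add_eq, div_eq_iff (by simp [hℓ']), eq_comm, mul_comm]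

theorem closely_spaced_wavenumbers_exist_unique_general
    (r ℓ : ℝ) (hℓ : 0 < ℓ) (F : ℂ → ℂ)
    (hF : DifferentiableOn ℂ F (Metric.closedBall (0 : ℂ) r))
    (hF1 : ∀ k ∈ Metric.closedBall (0 : ℂ) r,
      ‖F k - 1‖ < 1 - Real.exp (-(Real.pi / 2)))
    (n : ℤ) (hn : |n| ≤ ⌊2 * ℓ * r / Real.pi - 1 / 2⌋) :
    ∃! k : ℂ,
      k ∈ Metric.closedBall ((Real.pi * n / (2 * ℓ) : ℝ) : ℂ) (Real.pi / (4 * ℓ)) ∧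
      Complex.exp (4 * Complex.I * k * ℓ) = F k := by
  set A : ℂ := ((Real.pi * n / (2 * ℓ) : ℝ) : ℂ)
  set R := Real.pi / (4 * ℓ)
  have hsub : closedBall A R ⊆ closedBall 0 r :=
    closedBall_subset_closedBall_zero_of_abs_le_floor hℓ hn
  have hlog : ∀ k ∈ closedBall A R, ‖log (F k)‖ < Real.pi / 2 := fun k hk =>
    norm_log_lt_of_norm_sub_one_lt (hF1 k (hsub hk))
  have hslit : ∀ k ∈ closedBall A R, F k ∈ slitPlane := fun k hk => by
    have h := mem_slitPlane_of_norm_lt_one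
      ((hF1 k (hsub hk)).trans_le (by linarith [Real.exp_pos (-(Real.pi / 2))]))
    rwa [add_sub_cancel] at h
  have hΦ : DifferentiableOn ℂ (fun k => A + log (F k) / (4 * I * ℓ)) (closedBall A R) :=
    fun k hk =>
    (((hF.mono hsub k hk).clog (hslit k hk)).div_const _).const_add A
  have hΦR : ∀ k ∈ closedBall A R, dist (A + log (F k) / (4 * I * ℓ)) A < R / 2 := by
    intro k hk
    have h4ℓ : ‖4 * I * (ℓ : ℂ)‖ = 4 * ℓ := by simp [abs_of_pos hℓ]
    rw [dist_eq_norm, add_sub_cancel_left, norm_div, h4ℓ, div_lt_iff₀ (by positivity)]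
    calc ‖log (F k)‖ < Real.pi / 2 := hlog k hk
      _ = R / 2 * (4 * ℓ) := by simp only [R]; field_simp
  refine (existsUnique_congr fun k => and_congr_right fun hk => ?_).1
    (existsUnique_fixedPt_of_forall_dist_lt_half (by positivity) hΦ hΦR)
  exact (exp_four_I_mul_eq_iff_of_mem_closedBall hℓ n hk (slitPlane_ne_zero (hslit k hk))
    ((hlog k hk).trans (by linarith [Real.pi_pos]))).symm

/-- For a function `F` holomorphic on the closed disk `B` of radius `r`,
with `|F(k) - 1| < 1 - e^{-π/2}` on `B` and satisfying the contraction condition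
`(e^{π/2}/(4ℓ)) · max_B |F'| < 1`, for every integer `n` with `|n| ≤ ⌊2ℓr/π - 1/2⌋`
the equation `e^{4ikℓ} = F(k)` has exactly one solution in the closed disk of radius
`π/(4ℓ)` centered at `a_n = πn/(2ℓ)`. -/
theorem closely_spaced_wavenumbers_exist_unique
    (r ℓ : ℝ) (hr : 0 < r) (hℓ : 0 < ℓ) (F : ℂ → ℂ)
    (hF : DifferentiableOn ℂ F (Metric.closedBall (0 : ℂ) r))
    (hF1 : ∀ k ∈ Metric.closedBall (0 : ℂ) r,
      ‖F k - 1‖ < 1 - Real.exp (-(Real.pi / 2)))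
    (hcontr : Real.exp (Real.pi / 2) / (4 * ℓ) *
      sSup ((fun k => ‖deriv F k‖) '' Metric.closedBall (0 : ℂ) r) < 1)
    (n : ℤ) (hn : |n| ≤ ⌊2 * ℓ * r / Real.pi - 1 / 2⌋) :
    ∃! k : ℂ,
      k ∈ Metric.closedBall ((Real.pi * n / (2 * ℓ) : ℝ) : ℂ) (Real.pi / (4 * ℓ)) ∧
      Complex.exp (4 * Complex.I * k * ℓ) = F k :=
  closely_spaced_wavenumbers_exist_unique_general r ℓ hℓ F hF hF1 n hn
end

section
/- Let r>0, ℓ>0, and a ∈ ℝ with |a| + π/(4ℓ) ≤ r. Let B denote the closed disk {k ∈ ℂ : |k| ≤ r}, and suppose F : ℂ → ℂ is holomorphic on B and satisfies |F(k) − 1| ≤ 1 − e^{−π/2} for all k ∈ B. Then for every z ∈ ℂ with |z| ≤ π/(4ℓ) one has |−(i/(4ℓ))·Log F(z + a)| ≤ π/(4ℓ); that is, the map z ↦ −(i/(4ℓ))·Log F(z + a) maps the closed disk of radius π/(4ℓ) centered at 0 into itself. -/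
/-! On the disk, `F` takes values `w` with `e^{-π/2} ≤ Re w` and `|w| ≤ 2 ≤ e^{π/2}`, so both
`Re (Log w) = log |w|` and `Im (Log w) = arg w` lie in `[-π/2, π/2]`, whence `|Log w| ≤ π`. -/

open Real

lemma Real.abs_log_le_of_exp_neg_le_of_le_exp {x t : ℝ} (hlow : exp (-t) ≤ x)
    (hup : x ≤ exp t) : |log x| ≤ t := by
  have hx : 0 < x := (exp_pos _).trans_le hlow
  exact abs_le.mpr ⟨(le_log_iff_exp_le hx).mpr hlow, (log_le_iff_le_exp hx).mpr hup⟩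

lemma Real.two_le_exp_pi_div_two : 2 ≤ exp (π / 2) := by
  linarith [add_one_le_exp (π / 2), two_le_pi]

namespace Complex

lemma le_re_of_norm_sub_one_le {w : ℂ} {c : ℝ} (h : ‖w - 1‖ ≤ 1 - c) : c ≤ w.re := by
  have h' := abs_le.mp ((abs_re_le_norm (w - 1)).trans h)
  rw [sub_re, one_re] at h'
  linarith [h'.1]

lemma norm_le_two_of_norm_sub_one_le {w : ℂ} {c : ℝ} (hc : 0 ≤ c) (h : ‖w - 1‖ ≤ 1 - c) :
    ‖w‖ ≤ 2 := by
  have := norm_le_insert' w 1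
  rw [norm_one] at this
  linarith

lemma norm_log_le_abs_log_norm_add_abs_arg (w : ℂ) : ‖log w‖ ≤ |Real.log ‖w‖| + |arg w| := by
  simpa only [log_re, log_im] using norm_le_abs_re_add_abs_im (log w)

lemma norm_log_le_pi_of_norm_sub_one_le {w : ℂ} (h : ‖w - 1‖ ≤ 1 - Real.exp (-(π / 2))) :
    ‖log w‖ ≤ π := by
  have hre := le_re_of_norm_sub_one_le h
  have hlow : Real.exp (-(π / 2)) ≤ ‖w‖ := hre.trans (re_le_norm w)
  have hup : ‖w‖ ≤ Real.exp (π / 2) :=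
    (norm_le_two_of_norm_sub_one_le (Real.exp_pos _).le h).trans two_le_exp_pi_div_two
  have harg : |arg w| ≤ π / 2 :=
    abs_arg_le_pi_div_two_iff.mpr ((Real.exp_pos _).trans_le hre).le
  calc ‖log w‖ ≤ |Real.log ‖w‖| + |arg w| := norm_log_le_abs_log_norm_add_abs_arg w
    _ ≤ π / 2 + π / 2 := add_le_add (abs_log_le_of_exp_neg_le_of_le_exp hlow hup) harg
    _ = π := add_halves π

end Complex

lemma add_ofReal_mem_closedBall {z : ℂ} {a ρ r : ℝ} (hz : ‖z‖ ≤ ρ) (ha : |a| + ρ ≤ r) :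
    z + (a : ℂ) ∈ Metric.closedBall (0 : ℂ) r := by
  rw [mem_closedBall_zero_iff]
  calc ‖z + (a : ℂ)‖ ≤ ‖z‖ + |a| := by simpa using norm_add_le z (a : ℂ)
    _ ≤ r := by linarith

theorem log_map_maps_disk_into_itself_general
    (r ℓ a : ℝ) (hℓ : 0 < ℓ) (ha : |a| + Real.pi / (4 * ℓ) ≤ r)
    (F : ℂ → ℂ)
    (hF1 : ∀ k ∈ Metric.closedBall (0 : ℂ) r,
      ‖F k - 1‖ ≤ 1 - Real.exp (-(Real.pi / 2))) :
    ∀ z : ℂ, ‖z‖ ≤ Real.pi / (4 * ℓ) →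
      ‖-(Complex.I / (4 * ℓ)) * Complex.log (F (z + (a : ℂ)))‖ ≤
        Real.pi / (4 * ℓ) := by
  intro z hz
  have hlog := Complex.norm_log_le_pi_of_norm_sub_one_le (hF1 _ (add_ofReal_mem_closedBall hz ha))
  have hcoef : ‖-(Complex.I / (4 * ℓ))‖ = (4 * ℓ)⁻¹ := by
    rw [norm_neg, norm_div, Complex.norm_I, one_div]
    norm_cast
    rw [Real.norm_of_nonneg (by positivity)]
  rw [norm_mul, hcoef, inv_mul_eq_div]
  gcongr

/-- If `|a| + π/(4ℓ) ≤ r`, `F` is holomorphic on the closed disk `B` of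
radius `r` and `|F(k) - 1| ≤ 1 - e^{-π/2}` on `B`, then the map
`z ↦ -(i/(4ℓ)) Log F(z + a)` maps the closed disk of radius `π/(4ℓ)` centered at `0`
into itself. -/
theorem log_map_maps_disk_into_itself
    (r ℓ a : ℝ) (hr : 0 < r) (hℓ : 0 < ℓ) (ha : |a| + Real.pi / (4 * ℓ) ≤ r)
    (F : ℂ → ℂ) (hF : DifferentiableOn ℂ F (Metric.closedBall (0 : ℂ) r))
    (hF1 : ∀ k ∈ Metric.closedBall (0 : ℂ) r,
      ‖F k - 1‖ ≤ 1 - Real.exp (-(Real.pi / 2))) :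
    ∀ z : ℂ, ‖z‖ ≤ Real.pi / (4 * ℓ) →
      ‖-(Complex.I / (4 * ℓ)) * Complex.log (F (z + (a : ℂ)))‖ ≤
        Real.pi / (4 * ℓ) :=
  log_map_maps_disk_into_itself_general r ℓ a hℓ ha F hF1
end

section
/- Let h : ℂ → ℂ be an entire function, let m ∈ ℕ with m ≥ 1, and let a ∈ ℂ. Then Σ_{Θ} [ D^{|Θ|}h(a) · ∏_{θ ∈ Θ} D^{|θ|−1}[h^{|θ|}](a) ] = (1/(m+1)) · D^{m}[h^{m+1}](a), where the sum runs over all partitions Θ of the set {1, …, m} into nonempty blocks, |Θ| denotes the number of blocks of Θ, |θ| denotes the cardinality of a block θ, h^{j} is the j-th power of h, and D^{j} denotes the j-th complex derivative. -/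
/-!
Let `T` be the Taylor series of `h` at `a` and `Q = ∑ₙ ([Xⁿ] T^(n+1) / (n+1)) Xⁿ`.
Then `D^(k-1)[h^k](a) = k! · [X^k] (X Q)`, so by the exponential formula for set partitions the
left-hand side is `m! · [X^m] T(X Q)`. Lagrange inversion says that `Q = T(X Q)`, hence the sum is
`m! · [X^m] Q = D^m[h^(m+1)](a) / (m+1)`.
-/

open Finset PowerSeries
open scoped ContDiff Nat

section Taylor

variable {𝕜 : Type*} [NontriviallyNormedField 𝕜] [CharZero 𝕜]

noncomputable def taylorSeries (f : 𝕜 → 𝕜) (a : 𝕜) : 𝕜⟦X⟧ :=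
  mk fun n => iteratedDeriv n f a / n !

lemma iteratedDeriv_eq_factorial_mul_coeff_taylorSeries (f : 𝕜 → 𝕜) (a : 𝕜) (n : ℕ) :
    iteratedDeriv n f a = n ! * coeff n (taylorSeries f a) := by
  rw [taylorSeries, coeff_mk, mul_div_cancel₀ _ (Nat.cast_ne_zero.mpr n.factorial_ne_zero)]

lemma taylorSeries_one (a : 𝕜) : taylorSeries 1 a = 1 := by
  ext n
  rcases n with _ | n <;> simp [taylorSeries, Pi.one_def, iteratedDeriv_const, coeff_one]

lemma taylorSeries_mul {f g : 𝕜 → 𝕜} (hf : ContDiff 𝕜 ∞ f) (hg : ContDiff 𝕜 ∞ g) (a : 𝕜) :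
    taylorSeries (f * g) a = taylorSeries f a * taylorSeries g a := by
  ext n
  have hn : ((n : ℕ∞) : WithTop ℕ∞) ≤ ∞ := by exact_mod_cast le_top
  rw [coeff_mul, Nat.sum_antidiagonal_eq_sum_range_succ_mk, taylorSeries, coeff_mk,
    iteratedDeriv_mul (hf.of_le hn).contDiffAt (hg.of_le hn).contDiffAt, Finset.sum_div]
  refine Finset.sum_congr rfl fun k hk => ?_
  have hkn : k ≤ n := Nat.lt_succ_iff.mp (mem_range.mp hk)
  simp only [taylorSeries, coeff_mk]
  have := n.factorial_ne_zero
  have := k.factorial_ne_zero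
  have := (n - k).factorial_ne_zero
  rw [Nat.cast_choose 𝕜 hkn]
  field_simp

lemma taylorSeries_pow {f : 𝕜 → 𝕜} (hf : ContDiff 𝕜 ∞ f) (a : 𝕜) (n : ℕ) :
    taylorSeries (f ^ n) a = taylorSeries f a ^ n := by
  induction n with
  | zero => simpa using taylorSeries_one a
  | succ n ih => rw [pow_succ, taylorSeries_mul (f := f ^ n) (by exact hf.pow n) hf, ih, pow_succ]

lemma iteratedDeriv_pow_eq_factorial_mul_coeff_taylorSeries_pow {f : 𝕜 → 𝕜}
    (hf : ContDiff 𝕜 ∞ f) (a : 𝕜) (k n : ℕ) :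
    iteratedDeriv n (fun z => f z ^ k) a = n ! * coeff n (taylorSeries f a ^ k) := by
  rw [iteratedDeriv_eq_factorial_mul_coeff_taylorSeries, ← taylorSeries_pow hf]
  rfl

end Taylor

section PowerSeries

variable {R : Type*}

lemma coeff_X_mul_derivative [CommSemiring R] (f : R⟦X⟧) (n : ℕ) :
    coeff n (X * d⁄dX R f) = n * coeff n f := by
  rcases n with _ | n
  · simp
  · rw [coeff_succ_X_mul, coeff_derivative, mul_comm]
    push_cast
    ring

lemma natCast_succ_mul_coeff_X_mul_derivative_mul_pow [CommSemiring R] (f : R⟦X⟧) (k n : ℕ) :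
    (k + 1 : R) * coeff n (X * d⁄dX R f * f ^ k) = n * coeff n (f ^ (k + 1)) := by
  rw [← coeff_X_mul_derivative, derivative_pow, ← map_natCast (C (R := R)), ← coeff_C_mul]
  congr 1
  push_cast
  simp only [map_add, map_natCast, map_one]
  ring

lemma coeff_mul_eq_sum_coeff_X_pow_mul [CommSemiring R] (f g : R⟦X⟧) (n : ℕ) :
    coeff n (f * g) = ∑ p ∈ range (n + 1), coeff p f * coeff n (X ^ p * g) := by
  rw [coeff_mul, Nat.sum_antidiagonal_eq_sum_range_succ_mk]
  refine sum_congr rfl fun p hp => ?_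
  rw [coeff_X_pow_mul', if_pos (Nat.lt_succ_iff.mp (mem_range.mp hp))]

lemma coeff_mul_eq_of_forall_coeff_eq [CommSemiring R] {f g : R⟦X⟧} {n : ℕ}
    (h : ∀ s ≤ n, coeff s f = coeff s g) (k : R⟦X⟧) : coeff n (f * k) = coeff n (g * k) := by
  simp only [coeff_mul]
  refine sum_congr rfl fun st hst => ?_
  rw [h st.1 (by rw [← mem_antidiagonal.mp hst]; exact Nat.le_add_right _ _)]

lemma coeff_pow_eq_zero_of_lt [CommSemiring R] {W : R⟦X⟧} (hW : constantCoeff W = 0)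
    {n p : ℕ} (h : n < p) : coeff n (W ^ p) = 0 :=
  X_pow_dvd_iff.mp (pow_dvd_pow_of_dvd (X_dvd_iff.mpr hW) p) n h

lemma coeff_subst_eq_sum [CommRing R] {W : R⟦X⟧} (hW : constantCoeff W = 0) (f : R⟦X⟧)
    {n N : ℕ} (h : n < N) : coeff n (f.subst W) = ∑ p ∈ range N, coeff p f * coeff n (W ^ p) := by
  rw [coeff_subst' (HasSubst.of_constantCoeff_zero' hW)]
  refine finsum_eq_sum_of_support_subset _ fun p hp => ?_
  by_contra hpN
  exact hp (by simp [coeff_pow_eq_zero_of_lt hW (h.trans_le (by simpa using hpN))])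

lemma coeff_pow_succ_eq_sum_of_coeff_subst_X_mul [CommRing R] (H Q : R⟦X⟧) {e : ℕ}
    (hF : ∀ s ≤ e, coeff s (H.subst (X * Q)) = coeff s Q) (i : ℕ) :
    coeff e (Q ^ (i + 1)) = ∑ p ∈ range (e + 1), coeff p H * coeff e (X ^ p * Q ^ (p + i)) := by
  have htrunc : ∀ s ≤ e, coeff s (H.subst (X * Q))
      = coeff s (∑ p ∈ range (e + 1), C (coeff p H) * (X * Q) ^ p) := fun s hs => by
    rw [coeff_subst_eq_sum (W := X * Q) (by simp) H (Nat.lt_succ_of_le hs), map_sum]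
    simp only [coeff_C_mul]
  rw [pow_succ', ← coeff_mul_eq_of_forall_coeff_eq hF, coeff_mul_eq_of_forall_coeff_eq htrunc,
    sum_mul, map_sum]
  refine sum_congr rfl fun p _ => ?_
  rw [← coeff_C_mul]
  ring_nf

end PowerSeries

section Lagrange

variable {K : Type*} [Field K] [CharZero K] (H : K⟦X⟧)

noncomputable def lagrangeSeries : K⟦X⟧ :=
  mk fun n => coeff n (H ^ (n + 1)) / (n + 1)

lemma natCast_succ_mul_coeff_lagrangeSeries (n : ℕ) :
    (n + 1 : K) * coeff n (lagrangeSeries H) = coeff n (H ^ (n + 1)) := by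
  rw [lagrangeSeries, coeff_mk, mul_div_cancel₀ _ (Nat.cast_add_one_ne_zero n)]

/-- `n • [Xⁿ] H(X Q) = [Xⁿ] (X H' Hⁿ)` by Lagrange inversion in degree `n`, and
`(n + 1) • X H' Hⁿ = X (Hⁿ⁺¹)'`. -/
lemma coeff_subst_X_mul_lagrangeSeries_of {n : ℕ}
    (hL : ∀ p e, p + e = n →
      ((p + e : ℕ) : K) * coeff e (lagrangeSeries H ^ p) = p * coeff e (H ^ (p + e))) :
    coeff n (H.subst (X * lagrangeSeries H)) = coeff n (lagrangeSeries H) := by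
  set Q := lagrangeSeries H
  rw [coeff_subst_eq_sum (by simp) H (Nat.lt_succ_self n)]
  rcases Nat.eq_zero_or_pos n with rfl | hn
  · simp [Q, lagrangeSeries]
  have hterm : ∀ p ∈ range (n + 1),
      (n : K) * (coeff p H * coeff n ((X * Q) ^ p))
        = coeff p (X * d⁄dX K H) * coeff n (X ^ p * H ^ n) := by
    intro p hp
    obtain ⟨e, rfl⟩ := Nat.exists_eq_add_of_le (Nat.lt_succ_iff.mp (mem_range.mp hp))
    rw [mul_pow, add_comm p e, coeff_X_pow_mul, coeff_X_pow_mul, coeff_X_mul_derivative,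
      add_comm e p]
    linear_combination coeff p H * hL p e rfl
  have hsum : (n : K) * ∑ p ∈ range (n + 1), coeff p H * coeff n ((X * Q) ^ p)
      = coeff n (X * d⁄dX K H * H ^ n) := by
    rw [mul_sum, sum_congr rfl hterm, ← coeff_mul_eq_sum_coeff_X_pow_mul]
  have hQ := natCast_succ_mul_coeff_lagrangeSeries H n
  have hE := natCast_succ_mul_coeff_X_mul_derivative_mul_pow H n n
  have hn0 : ((n : K) + 1) * n ≠ 0 :=
    mul_ne_zero (Nat.cast_add_one_ne_zero n) (Nat.cast_ne_zero.mpr hn.ne')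
  refine mul_left_cancel₀ hn0 ?_
  linear_combination ((n : K) + 1) * hsum + hE - n * hQ

/-- Write `Q^(i+1) = Q · Q^i` and replace `Q` by `H(X Q)` up to degree `e`: the claim becomes
Lagrange inversion for the powers `Q^(p+i)` in total degree `i + e`, plus Euler's identity
`X (H^(i+e+1))' = (i + e + 1) • X H' H^(i+e)`. -/
lemma lagrange_inversion_succ_of {i e : ℕ} (hi : 0 < i)
    (hF : ∀ s ≤ e, coeff s (H.subst (X * lagrangeSeries H)) = coeff s (lagrangeSeries H))
    (hL : ∀ p e', p + e' = i + e →
      ((p + e' : ℕ) : K) * coeff e' (lagrangeSeries H ^ p) = p * coeff e' (H ^ (p + e'))) :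
    ((i + 1 + e : ℕ) : K) * coeff e (lagrangeSeries H ^ (i + 1))
      = (i + 1 : ℕ) * coeff e (H ^ (i + 1 + e)) := by
  set Q := lagrangeSeries H
  have hterm : ∀ p ∈ range (e + 1),
      ((i + e : ℕ) : K) * (coeff p H * coeff e (X ^ p * Q ^ (p + i)))
      = coeff p (X * d⁄dX K H) * coeff e (X ^ p * H ^ (i + e))
        + i * (coeff p H * coeff e (X ^ p * H ^ (i + e))) := by
    intro p hp
    obtain ⟨e', rfl⟩ := Nat.exists_eq_add_of_le (Nat.lt_succ_iff.mp (mem_range.mp hp))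
    rw [add_comm p e', coeff_X_pow_mul, coeff_X_pow_mul, coeff_X_mul_derivative]
    have := hL (p + i) e' (by ring)
    rw [show p + i + e' = i + (e' + p) by ring] at this
    push_cast at this ⊢
    linear_combination coeff p H * this
  have hsum : ((i + e : ℕ) : K) * coeff e (Q ^ (i + 1))
      = coeff e (X * d⁄dX K H * H ^ (i + e)) + i * coeff e (H ^ (i + e + 1)) := by
    rw [coeff_pow_succ_eq_sum_of_coeff_subst_X_mul H Q hF, mul_sum, sum_congr rfl hterm,
      sum_add_distrib, ← mul_sum, ← coeff_mul_eq_sum_coeff_X_pow_mul,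
      ← coeff_mul_eq_sum_coeff_X_pow_mul, pow_succ' H]
  have hE := natCast_succ_mul_coeff_X_mul_derivative_mul_pow H (i + e) e
  have hie : ((i + e : ℕ) : K) ≠ 0 := Nat.cast_ne_zero.mpr (by omega)
  refine mul_left_cancel₀ hie ?_
  rw [show i + 1 + e = i + e + 1 by ring]
  push_cast at hsum hE ⊢
  linear_combination ((i : K) + e + 1) * hsum + hE

theorem lagrange_inversion (j e : ℕ) :
    ((j + e : ℕ) : K) * coeff e (lagrangeSeries H ^ j) = j * coeff e (H ^ (j + e)) := by
  induction h : j + e using Nat.strong_induction_on generalizing j e with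
  | _ N IH =>
  subst h
  rcases j with _ | _ | i
  · rcases e with _ | e <;> simp [coeff_one]
  · simpa [add_comm] using natCast_succ_mul_coeff_lagrangeSeries H e
  · refine lagrange_inversion_succ_of H (Nat.succ_pos i) (fun s hs => ?_) ?_
    · exact coeff_subst_X_mul_lagrangeSeries_of H fun p e' hpe => IH (p + e') (by omega) p e' rfl
    · exact fun p e' hpe => IH (p + e') (by omega) p e' rfl

theorem subst_X_mul_lagrangeSeries : H.subst (X * lagrangeSeries H) = lagrangeSeries H :=
  ext fun _ => coeff_subst_X_mul_lagrangeSeries_of H fun p e _ => lagrange_inversion H p e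

end Lagrange

section SetPartitions

variable {ι : Type*} [DecidableEq ι]

open Classical in
noncomputable def setPartitions (s : Finset ι) : Finset (Finset (Finset ι)) :=
  s.powerset.powerset.filter fun Θ =>
    (∀ θ ∈ Θ, θ.Nonempty) ∧ (Θ : Set (Finset ι)).PairwiseDisjoint id ∧ Θ.sup id = s

lemma mem_setPartitions {s : Finset ι} {Θ : Finset (Finset ι)} :
    Θ ∈ setPartitions s ↔
      (∀ θ ∈ Θ, θ.Nonempty) ∧ (Θ : Set (Finset ι)).PairwiseDisjoint id ∧ Θ.sup id = s := by
  classical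
  rw [setPartitions, mem_filter, and_iff_right_iff_imp]
  rintro ⟨-, -, hsup⟩
  exact mem_powerset.mpr fun θ hθ => mem_powerset.mpr (hsup ▸ le_sup (f := id) hθ)

variable {s A : Finset ι} {Θ : Finset (Finset ι)}

lemma subset_of_mem_setPartitions (hΘ : Θ ∈ setPartitions s) (hA : A ∈ Θ) : A ⊆ s :=
  (mem_setPartitions.mp hΘ).2.2 ▸ le_sup (f := id) hA

lemma setPartitions_empty : setPartitions (∅ : Finset ι) = {∅} := by
  ext Θ
  refine ⟨fun hΘ => mem_singleton.mpr (eq_empty_of_forall_notMem fun θ hθ => ?_), ?_⟩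
  · obtain ⟨x, hx⟩ := (mem_setPartitions.mp hΘ).1 θ hθ
    exact notMem_empty x (subset_of_mem_setPartitions hΘ hθ hx)
  · rintro h
    rw [mem_singleton.mp h, mem_setPartitions]
    simp

lemma notMem_of_mem_setPartitions_sdiff (hA : A.Nonempty) (hΘ : Θ ∈ setPartitions (s \ A)) :
    A ∉ Θ := fun hAΘ => by
  obtain ⟨x, hx⟩ := hA
  exact (mem_sdiff.mp (subset_of_mem_setPartitions hΘ hAΘ hx)).2 hx

lemma insert_mem_setPartitions (hA : A.Nonempty) (hAs : A ⊆ s)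
    (hΘ : Θ ∈ setPartitions (s \ A)) : insert A Θ ∈ setPartitions s := by
  obtain ⟨hne, hdisj, hsup⟩ := mem_setPartitions.mp hΘ
  refine mem_setPartitions.mpr ⟨?_, ?_, ?_⟩
  · simpa [hA] using hne
  · rw [coe_insert]
    refine hdisj.insert fun θ hθ _ => ?_
    exact disjoint_of_subset_right (subset_of_mem_setPartitions hΘ hθ) disjoint_sdiff
  · rw [sup_insert, hsup]
    exact union_sdiff_of_subset hAs

lemma erase_mem_setPartitions (hΘ : Θ ∈ setPartitions s) (hA : A ∈ Θ) :
    Θ.erase A ∈ setPartitions (s \ A) := by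
  obtain ⟨hne, hdisj, hsup⟩ := mem_setPartitions.mp hΘ
  refine mem_setPartitions.mpr
    ⟨fun θ hθ => hne θ (mem_of_mem_erase hθ), hdisj.subset (by simp), ?_⟩
  conv_rhs => rw [← hsup, ← insert_erase hA, sup_insert]
  refine (union_sdiff_cancel_left ?_).symm
  exact Finset.disjoint_sup_right.mpr fun θ hθ =>
    hdisj hA (mem_of_mem_erase hθ) (ne_of_mem_erase hθ).symm

lemma filter_mem_eq_singleton_of_mem_setPartitions (hΘ : Θ ∈ setPartitions s) (hA : A ∈ Θ)
    {e : ι} (he : e ∈ A) : Θ.filter (e ∈ ·) = {A} := by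
  ext θ
  simp only [mem_filter, mem_singleton]
  refine ⟨fun ⟨hθ, heθ⟩ => ?_, fun h => h ▸ ⟨hA, he⟩⟩
  by_contra hne
  exact disjoint_left.mp ((mem_setPartitions.mp hΘ).2.1 hθ hA hne) heθ he

lemma sum_setPartitions_filter_mem {M : Type*} [AddCommMonoid M] (hA : A.Nonempty)
    (hAs : A ⊆ s) (F : Finset (Finset ι) → M) :
    ∑ Θ ∈ (setPartitions s).filter (A ∈ ·), F Θ = ∑ Θ ∈ setPartitions (s \ A), F (insert A Θ) := by
  refine sum_nbij' (·.erase A) (insert A) (fun Θ hΘ => ?_) (fun Θ hΘ => ?_) (fun Θ hΘ => ?_)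
    (fun Θ hΘ => ?_) (fun Θ hΘ => ?_)
  · exact erase_mem_setPartitions (mem_filter.mp hΘ).1 (mem_filter.mp hΘ).2
  · exact mem_filter.mpr ⟨insert_mem_setPartitions hA hAs hΘ, mem_insert_self A Θ⟩
  · exact insert_erase (mem_filter.mp hΘ).2
  · exact erase_insert (notMem_of_mem_setPartitions_sdiff hA hΘ)
  · rw [insert_erase (mem_filter.mp hΘ).2]

lemma sum_setPartitions_eq_sum_sum_insert {M : Type*} [AddCommMonoid M] {e : ι} (he : e ∈ s)
    (F : Finset (Finset ι) → M) :
    ∑ Θ ∈ setPartitions s, F Θ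
      = ∑ A ∈ s.powerset.filter (e ∈ ·), ∑ Θ ∈ setPartitions (s \ A), F (insert A Θ) := by
  have hblock : ∀ Θ ∈ setPartitions s, F Θ = ∑ A ∈ Θ.filter (e ∈ ·), F Θ := fun Θ hΘ => by
    obtain ⟨A, hA, heA⟩ := mem_sup.mp ((mem_setPartitions.mp hΘ).2.2 ▸ he)
    rw [filter_mem_eq_singleton_of_mem_setPartitions hΘ hA heA, sum_singleton]
  rw [sum_congr rfl hblock, sum_comm' (t' := s.powerset.filter (e ∈ ·))
    (s' := fun A => (setPartitions s).filter (A ∈ ·))]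
  · refine sum_congr rfl fun A hA => ?_
    obtain ⟨hAs, heA⟩ := mem_filter.mp hA
    exact sum_setPartitions_filter_mem ⟨e, heA⟩ (mem_powerset.mp hAs) F
  · intro Θ A
    simp only [mem_filter, mem_powerset]
    exact ⟨fun ⟨hΘ, hA, heA⟩ => ⟨⟨hΘ, hA⟩, subset_of_mem_setPartitions hΘ hA, heA⟩,
      fun ⟨⟨hΘ, hA⟩, _, heA⟩ => ⟨hΘ, hA, heA⟩⟩

lemma sum_powerset_filter_mem_eq_sum_insert {M : Type*} [AddCommMonoid M] {e : ι} (he : e ∈ s)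
    (f : Finset ι → M) :
    ∑ A ∈ s.powerset.filter (e ∈ ·), f A = ∑ b ∈ (s.erase e).powerset, f (insert e b) := by
  refine sum_nbij' (·.erase e) (insert e) (fun A hA => ?_) (fun b hb => ?_) (fun A hA => ?_)
    (fun b hb => ?_) (fun A hA => ?_)
  · exact mem_powerset.mpr (erase_subset_erase e (mem_powerset.mp (mem_filter.mp hA).1))
  · exact mem_filter.mpr ⟨mem_powerset.mpr (insert_subset he
      ((mem_powerset.mp hb).trans (erase_subset e s))), mem_insert_self e b⟩
  · exact insert_erase (mem_filter.mp hA).2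
  · exact erase_insert fun h => by simpa using mem_powerset.mp hb h
  · rw [insert_erase (mem_filter.mp hA).2]

open Classical in
lemma filter_univ_eq_setPartitions_univ [Fintype ι] :
    univ.filter (fun Θ : Finset (Finset ι) => (∀ θ ∈ Θ, θ.Nonempty) ∧
      (Θ : Set (Finset ι)).PairwiseDisjoint id ∧ Θ.sup id = univ) = setPartitions univ := by
  rw [setPartitions, powerset_univ, powerset_univ]
  convert rfl

end SetPartitions

section ExponentialFormula

variable {R : Type*} [CommRing R] {W : R⟦X⟧}

lemma factorial_mul_coeff_subst_succ (hW : constantCoeff W = 0) (U : R⟦X⟧) (d : ℕ) :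
    ((d + 1)! : R) * coeff (d + 1) (U.subst W)
      = ∑ j ∈ range (d + 1), (d.choose j : R) * (((j + 1)! : R) * coeff (j + 1) W) *
          (((d - j)! : R) * coeff (d - j) ((d⁄dX R U).subst W)) := by
  have hchain : ((d + 1 : ℕ) : R) * coeff (d + 1) (U.subst W)
      = ∑ j ∈ range (d + 1), ((j + 1 : ℕ) : R) * coeff (j + 1) W *
          coeff (d - j) ((d⁄dX R U).subst W) := by
    rw [mul_comm, Nat.cast_succ, ← coeff_derivative, derivative_subst
      (HasSubst.of_constantCoeff_zero' hW), mul_comm, coeff_mul,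
      Nat.sum_antidiagonal_eq_sum_range_succ_mk]
    refine sum_congr rfl fun j _ => ?_
    rw [coeff_derivative]
    push_cast
    ring
  rw [Nat.factorial_succ, Nat.cast_mul, mul_comm _ (d ! : R), mul_assoc, hchain, mul_sum]
  refine sum_congr rfl fun j hj => ?_
  have hfac := Nat.choose_mul_factorial_mul_factorial (Nat.lt_succ_iff.mp (mem_range.mp hj))
  rw [← hfac, Nat.factorial_succ]
  push_cast
  ring

theorem sum_setPartitions_eq_factorial_mul_coeff_subst {ι : Type*} [DecidableEq ι]
    (hW : constantCoeff W = 0) (U : R⟦X⟧) (s : Finset ι) :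
    ∑ Θ ∈ setPartitions s, ((Θ.card ! : R) * coeff Θ.card U) *
        ∏ θ ∈ Θ, ((θ.card ! : R) * coeff θ.card W)
      = (s.card ! : R) * coeff s.card (U.subst W) := by
  induction h : s.card using Nat.strong_induction_on generalizing U s with
  | _ n IH =>
  rcases n with _ | d
  · rw [card_eq_zero.mp h, setPartitions_empty, sum_singleton,
      coeff_subst_eq_sum hW U (Nat.lt_succ_self 0)]
    simp
  obtain ⟨e, he⟩ := card_pos.mp (by omega : 0 < s.card)
  have hblock : ∀ A ∈ s.powerset.filter (e ∈ ·),
      ∑ Θ ∈ setPartitions (s \ A), ((insert A Θ).card ! * coeff (insert A Θ).card U) *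
          ∏ θ ∈ insert A Θ, ((θ.card ! : R) * coeff θ.card W)
        = ((A.card ! : R) * coeff A.card W) *
          (((d + 1 - A.card)! : R) * coeff (d + 1 - A.card) ((d⁄dX R U).subst W)) := by
    intro A hA
    obtain ⟨hAs, heA⟩ := mem_filter.mp hA
    have hAs := mem_powerset.mp hAs
    have hcard : (s \ A).card = d + 1 - A.card := by rw [card_sdiff_of_subset hAs, h]
    rw [← hcard, ← IH _ (by have := card_pos.mpr ⟨e, heA⟩; omega) _ _ rfl, mul_sum]
    refine sum_congr rfl fun Θ hΘ => ?_
    have hAΘ := notMem_of_mem_setPartitions_sdiff ⟨e, heA⟩ hΘ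
    rw [card_insert_of_notMem hAΘ, prod_insert hAΘ, coeff_derivative, Nat.factorial_succ]
    push_cast
    ring
  rw [sum_setPartitions_eq_sum_sum_insert he, sum_congr rfl hblock,
    sum_powerset_filter_mem_eq_sum_insert he]
  have hins : ∀ b ∈ (s.erase e).powerset, (insert e b).card = b.card + 1 := fun b hb =>
    card_insert_of_notMem fun heb => by simpa using mem_powerset.mp hb heb
  rw [sum_congr rfl fun b hb => by rw [hins b hb, Nat.add_sub_add_right],
    sum_powerset_apply_card (fun j => ((j + 1)! : R) * coeff (j + 1) W *
      (((d - j)! : R) * coeff (d - j) ((d⁄dX R U).subst W))), card_erase_of_mem he, h,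
    Nat.add_sub_cancel, factorial_mul_coeff_subst_succ hW]
  simp only [nsmul_eq_mul, mul_assoc]

end ExponentialFormula

lemma iteratedDeriv_pred_pow_eq_factorial_mul_coeff_X_mul_lagrangeSeries {𝕜 : Type*}
    [NontriviallyNormedField 𝕜] [CharZero 𝕜] {f : 𝕜 → 𝕜} (hf : ContDiff 𝕜 ∞ f) (a : 𝕜) {k : ℕ}
    (hk : k ≠ 0) : iteratedDeriv (k - 1) (fun z => f z ^ k) a
      = k ! * coeff k (X * lagrangeSeries (taylorSeries f a)) := by
  obtain ⟨c, rfl⟩ := Nat.exists_eq_succ_of_ne_zero hk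
  rw [Nat.succ_sub_one, iteratedDeriv_pow_eq_factorial_mul_coeff_taylorSeries_pow hf,
    coeff_succ_X_mul, ← natCast_succ_mul_coeff_lagrangeSeries, Nat.factorial_succ]
  push_cast
  ring

open Classical in
theorem faa_di_bruno_partition_identity_general
    (h : ℂ → ℂ) (hh : Differentiable ℂ h) (m : ℕ) (a : ℂ) :
    ∑ Θ ∈ Finset.univ.filter (fun Θ : Finset (Finset (Fin m)) =>
        (∀ θ ∈ Θ, θ.Nonempty) ∧
        (Θ : Set (Finset (Fin m))).PairwiseDisjoint id ∧
        Θ.sup id = Finset.univ),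
      iteratedDeriv Θ.card h a *
        ∏ θ ∈ Θ, iteratedDeriv (θ.card - 1) (fun k => (h k) ^ θ.card) a
    = (1 / ((m : ℂ) + 1)) * iteratedDeriv m (fun k => (h k) ^ (m + 1)) a := by
  rw [filter_univ_eq_setPartitions_univ]
  calc _ = ∑ Θ ∈ setPartitions (univ : Finset (Fin m)),
        ((Θ.card ! : ℂ) * coeff Θ.card (taylorSeries h a)) *
          ∏ θ ∈ Θ, ((θ.card ! : ℂ) * coeff θ.card (X * lagrangeSeries (taylorSeries h a))) := by
        refine sum_congr rfl fun Θ hΘ => ?_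
        rw [iteratedDeriv_eq_factorial_mul_coeff_taylorSeries]
        exact congrArg _ <| prod_congr rfl fun θ hθ =>
          iteratedDeriv_pred_pow_eq_factorial_mul_coeff_X_mul_lagrangeSeries hh.contDiff a
            (card_ne_zero.mpr ((mem_setPartitions.mp hΘ).1 θ hθ))
    _ = m ! * coeff m (lagrangeSeries (taylorSeries h a)) := by
        rw [sum_setPartitions_eq_factorial_mul_coeff_subst (by simp), card_univ, Fintype.card_fin,
          subst_X_mul_lagrangeSeries]
    _ = _ := by
        rw [iteratedDeriv_pow_eq_factorial_mul_coeff_taylorSeries_pow hh.contDiff,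
          ← natCast_succ_mul_coeff_lagrangeSeries]
        field_simp

open Classical in
/-- Faà di Bruno-type identity: for an entire function `h`, `m ≥ 1`
and `a ∈ ℂ`, summing over all partitions `Θ` of the `m`-element set `Fin m` into
nonempty blocks,
`Σ_Θ D^{|Θ|}h(a) · ∏_{θ ∈ Θ} D^{|θ|-1}[h^{|θ|}](a) = (1/(m+1)) · D^m[h^{m+1}](a)`. -/
theorem faa_di_bruno_partition_identity
    (h : ℂ → ℂ) (hh : Differentiable ℂ h) (m : ℕ) (hm : 1 ≤ m) (a : ℂ) :
    ∑ Θ ∈ Finset.univ.filter (fun Θ : Finset (Finset (Fin m)) =>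
        (∀ θ ∈ Θ, θ.Nonempty) ∧
        (Θ : Set (Finset (Fin m))).PairwiseDisjoint id ∧
        Θ.sup id = Finset.univ),
      iteratedDeriv Θ.card h a *
        ∏ θ ∈ Θ, iteratedDeriv (θ.card - 1) (fun k => (h k) ^ θ.card) a
    = (1 / ((m : ℂ) + 1)) * iteratedDeriv m (fun k => (h k) ^ (m + 1)) a :=
  faa_di_bruno_partition_identity_general h hh m a
end

section
/- For all m, p ∈ ℕ with 1 ≤ p ≤ m, Σ_{Θ : |Θ| = p} ∏_{θ ∈ Θ} |θ|^{|θ|−1} = ( (m−1)! / ((p−1)!·(m−p)!) ) · m^{m−p}, where the sum runs over all partitions Θ of the set {1, …, m} into exactly p nonempty blocks and |θ| denotes the cardinality of a block θ. -/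
/-!
A map `f : α → α` all of whose orbits end in fixed points is a rooted forest on `α`, with edges
`x ↦ f x` and the fixed points as roots. Its trees partition `α`, and the forests inducing a
given partition `Θ` are exactly the families of rooted trees on the blocks of `Θ`; so the sum
counts the rooted forests on `m` vertices with `p` trees. Their number `F p` satisfies
`F (p + 1) * (m * p) = F p * (m - p)`, because grafting the tree of a root `r` below a vertex `v`
of another tree is inverse to cutting a non-root `r` off its parent. With `F m = 1` this gives
`F p = C(m - 1, p - 1) * m ^ (m - p)`, and `F 1 = m ^ (m - 1)` is the number of rooted trees on a
block used above.
-/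

open Finset Function Fintype

variable {α : Type*}

theorem Function.IsFixedPt.iterate_of_le {f : α → α} {x : α} {m n : ℕ}
    (h : IsFixedPt f (f^[m] x)) (hmn : m ≤ n) : IsFixedPt f (f^[n] x) := by
  obtain ⟨k, rfl⟩ := Nat.exists_eq_add_of_le' hmn
  rwa [iterate_add_apply, (h.iterate k).eq]

theorem Function.IsPeriodicPt.isFixedPt_of_isFixedPt_iterate {f : α → α} {y : α} {n k : ℕ}
    (hy : IsPeriodicPt f n y) (hn : 0 < n) (hk : IsFixedPt f (f^[k] y)) : IsFixedPt f y := by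
  rw [← (hy.mul_const k).eq]
  exact hk.iterate_of_le (Nat.le_mul_of_pos_left k hn)

def IsRootedForest (f : α → α) : Prop := ∀ x, ∃ n, IsFixedPt f (f^[n] x)

section Roots

variable [Fintype α] {f : α → α}

/-- In a rooted forest, `card α` steps from `x` reach the root of its tree. -/
def root (f : α → α) (x : α) : α := f^[card α] x

def roots [DecidableEq α] (f : α → α) : Finset α := univ.filter (IsFixedPt f)

theorem mem_roots [DecidableEq α] {x : α} : x ∈ roots f ↔ IsFixedPt f x := by simp [roots]

theorem root_eq_self_of_isFixedPt {x : α} (hx : IsFixedPt f x) : root f x = x := (hx.iterate _).eq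

namespace IsRootedForest

theorem isFixedPt_root (hf : IsRootedForest f) (x : α) : IsFixedPt f (root f x) := by
  -- Two of the points `f^[i] x`, `i ≤ card α`, coincide: the earlier one is periodic and reaches
  -- a fixed point, hence is itself fixed.
  obtain ⟨i, j, hij, heq⟩ := exists_ne_map_eq_of_card_lt (fun i : Fin (card α + 1) ↦ f^[i] x)
    (by simp)
  wlog hlt : i < j generalizing i j
  · exact this j i hij.symm heq.symm (lt_of_le_of_ne (not_lt.1 hlt) hij.symm)
  have hper : IsPeriodicPt f (j - i) (f^[i] x) := by
    rw [IsPeriodicPt, IsFixedPt, ← iterate_add_apply, Nat.sub_add_cancel hlt.le]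
    exact heq.symm
  obtain ⟨n, hn⟩ := hf x
  have hi : IsFixedPt f (f^[i] x) := by
    rcases le_total n i with h | h
    · exact hn.iterate_of_le h
    · refine hper.isFixedPt_of_isFixedPt_iterate (Nat.sub_pos_of_lt hlt) (k := n - i) ?_
      rwa [← iterate_add_apply, Nat.sub_add_cancel h]
  exact hi.iterate_of_le (by omega)

theorem root_eq_of_iterate_eq (hf : IsRootedForest f) {r y : α} (hr : IsFixedPt f r) {n : ℕ}
    (h : f^[n] y = r) : root f y = r :=
  calc root f y = f^[n] (root f y) := ((hf.isFixedPt_root y).iterate n).eq.symm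
    _ = f^[card α] (f^[n] y) := by rw [root, ← iterate_add_apply, ← iterate_add_apply, add_comm]
    _ = r := by rw [h, (hr.iterate _).eq]

theorem root_apply (hf : IsRootedForest f) (x : α) : root f (f x) = root f x := by
  rw [root, ← iterate_succ_apply, iterate_succ_apply']
  exact hf.isFixedPt_root x

theorem image_root [DecidableEq α] (hf : IsRootedForest f) : univ.image (root f) = roots f := by
  ext r
  simp only [mem_image, mem_univ, true_and, mem_roots]
  exact ⟨by rintro ⟨x, rfl⟩; exact hf.isFixedPt_root x,
    fun hr ↦ ⟨r, root_eq_self_of_isFixedPt hr⟩⟩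

theorem card_roots_eq_one_iff [DecidableEq α] [Nonempty α] (hf : IsRootedForest f) :
    #(roots f) = 1 ↔ ∀ x y, root f x = root f y := by
  have hpos : 0 < #(roots f) := by
    rw [← hf.image_root]; exact card_pos.2 (univ_nonempty.image _)
  rw [← hf.image_root] at hpos ⊢
  refine ⟨fun h x y ↦ card_le_one.1 h.le _ (mem_image_of_mem _ (mem_univ x)) _
    (mem_image_of_mem _ (mem_univ y)), fun h ↦ le_antisymm (card_le_one.2 ?_) hpos⟩
  simp only [mem_image, mem_univ, true_and]
  rintro _ ⟨x, rfl⟩ _ ⟨y, rfl⟩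
  exact h x y

end IsRootedForest

end Roots

section Update

variable {f g : α → α} {r : α}

theorem iterate_eq_of_forall_iterate_ne (hfg : ∀ y ≠ r, g y = f y) {x : α}
    (hx : ∀ n, f^[n] x ≠ r) (n : ℕ) : g^[n] x = f^[n] x := by
  induction n generalizing x with
  | zero => rfl
  | succ n ih =>
    rw [iterate_succ_apply, iterate_succ_apply, hfg x (hx 0), ih fun k ↦ hx (k + 1)]

theorem exists_iterate_eq_of_iterate_eq (hfg : ∀ y ≠ r, g y = f y) {x : α} {n : ℕ}
    (hn : f^[n] x = r) : ∃ k, g^[k] x = r := by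
  induction n generalizing x with
  | zero => exact ⟨0, hn⟩
  | succ n ih =>
    by_cases hx : x = r
    · exact ⟨0, hx⟩
    · obtain ⟨k, hk⟩ := ih (x := f x) hn
      exact ⟨k + 1, by rwa [iterate_succ_apply, hfg x hx]⟩

variable [DecidableEq α]

theorem roots_update_self [Fintype α] (f : α → α) (r : α) :
    roots (update f r r) = insert r (roots f) := by
  ext x
  by_cases hx : x = r <;> simp [mem_roots, IsFixedPt, hx]

theorem roots_update_of_ne [Fintype α] {v : α} (hv : v ≠ r) :
    roots (update f r v) = (roots f).erase r := by
  ext x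
  by_cases hx : x = r <;> simp [mem_roots, IsFixedPt, hx, hv]

theorem IsRootedForest.update_self (hf : IsRootedForest f) (r : α) :
    IsRootedForest (update f r r) := by
  have hfg : ∀ y ≠ r, f y = update f r r y := fun y hy ↦ (update_of_ne hy _ _).symm
  intro x
  by_cases hx : ∃ k, (update f r r)^[k] x = r
  · obtain ⟨k, hk⟩ := hx
    exact ⟨k, by rw [hk, IsFixedPt, Function.update_self]⟩
  · push Not at hx
    obtain ⟨n, hn⟩ := hf x
    have h := iterate_eq_of_forall_iterate_ne hfg hx n
    refine ⟨n, ?_⟩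
    rwa [← h, IsFixedPt, ← hfg _ (h ▸ hx n)]

theorem IsRootedForest.root_update_self_apply_ne [Fintype α] (hf : IsRootedForest f)
    (hr : ¬IsFixedPt f r) : root (update f r r) (f r) ≠ r := by
  intro h
  have hfg : ∀ y ≠ r, f y = update f r r y := fun y hy ↦ (update_of_ne hy _ _).symm
  obtain ⟨k, hk⟩ := exists_iterate_eq_of_iterate_eq hfg h
  obtain ⟨n, hn⟩ := hf r
  exact hr ((show IsPeriodicPt f (k + 1) r from hk).isFixedPt_of_isFixedPt_iterate k.succ_pos hn)

theorem IsRootedForest.update_of_isFixedPt [Fintype α] (hf : IsRootedForest f)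
    (hr : IsFixedPt f r) {v : α} (hv : root f v ≠ r) : IsRootedForest (update f r v) := by
  have hfg : ∀ y ≠ r, update f r v y = f y := fun y hy ↦ update_of_ne hy _ _
  have outside : ∀ y, root f y ≠ r → ∃ n, IsFixedPt (update f r v) ((update f r v)^[n] y) := by
    intro y hy
    refine ⟨card α, ?_⟩
    rw [iterate_eq_of_forall_iterate_ne hfg fun n hn ↦ hy (hf.root_eq_of_iterate_eq hr hn),
      IsFixedPt, ← root, hfg _ hy]
    exact hf.isFixedPt_root y
  intro x
  by_cases hx : root f x = r
  · obtain ⟨k, hk⟩ := exists_iterate_eq_of_iterate_eq hfg hx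
    obtain ⟨n, hn⟩ := outside v hv
    exact ⟨n + (k + 1), by rwa [iterate_add_apply, iterate_succ_apply', hk, Function.update_self]⟩
  · exact outside x hx

end Update

section Count

variable (α) [Fintype α] [DecidableEq α]

open scoped Classical in
noncomputable def forests (p : ℕ) : Finset (α → α) :=
  univ.filter fun f ↦ IsRootedForest f ∧ #(roots f) = p

variable {α}

theorem mem_forests {f : α → α} {p : ℕ} : f ∈ forests α p ↔ IsRootedForest f ∧ #(roots f) = p := by
  simp [forests]

theorem forests_card : forests α (card α) = {id} := by
  ext f
  simp only [mem_forests, mem_singleton]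
  constructor
  · rintro ⟨-, h⟩
    funext x
    exact mem_roots.1 ((eq_univ_of_card _ h).symm ▸ mem_univ x)
  · rintro rfl
    exact ⟨fun _ ↦ ⟨0, rfl⟩, by simp [roots, isFixedPt_id]⟩

variable {p : ℕ} {f : α → α} {r v : α}

theorem ne_of_mem_erase_roots (hr : r ∈ (roots f).erase (root f v)) : v ≠ r := by
  rintro rfl
  exact (mem_erase.1 hr).1 (root_eq_self_of_isFixedPt (mem_roots.1 (mem_erase.1 hr).2)).symm

theorem update_mem_forests (hf : f ∈ forests α (p + 1)) (hr : r ∈ (roots f).erase (root f v)) :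
    update f r v ∈ forests α p := by
  obtain ⟨hf, hcard⟩ := mem_forests.1 hf
  obtain ⟨hrv, hr'⟩ := mem_erase.1 hr
  rw [mem_forests, roots_update_of_ne (ne_of_mem_erase_roots hr), card_erase_of_mem hr', hcard,
    Nat.add_sub_cancel]
  exact ⟨hf.update_of_isFixedPt (mem_roots.1 hr') (Ne.symm hrv), rfl⟩

theorem update_self_mem_forests (hf : f ∈ forests α p) (hr : r ∉ roots f) :
    update f r r ∈ forests α (p + 1) := by
  obtain ⟨hf, hcard⟩ := mem_forests.1 hf
  rw [mem_forests, roots_update_self, card_insert_of_notMem hr, hcard]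
  exact ⟨hf.update_self r, rfl⟩

theorem card_forests_succ_mul (p : ℕ) :
    #(forests α (p + 1)) * (card α * p) = #(forests α p) * (card α - p) := by
  have hS : #((forests α (p + 1)).sigma fun f ↦ univ.sigma fun v ↦ (roots f).erase (root f v))
      = #(forests α (p + 1)) * (card α * p) := by
    rw [card_sigma, sum_const_nat]
    intro f hf
    rw [card_sigma, sum_const_nat, card_univ, mul_comm]
    intro v _
    rw [card_erase_of_mem (mem_roots.2 ((mem_forests.1 hf).1.isFixedPt_root v)),
      (mem_forests.1 hf).2, Nat.add_sub_cancel]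
  have hT : #((forests α p).sigma fun f ↦ (roots f)ᶜ) = #(forests α p) * (card α - p) := by
    rw [card_sigma, sum_const_nat]
    intro f hf
    rw [card_compl, (mem_forests.1 hf).2]
  rw [← hS, ← hT]
  refine card_nbij' (fun x ↦ ⟨update x.1 x.2.2 x.2.1, x.2.2⟩)
    (fun y ↦ ⟨update y.1 y.2 y.2, y.1 y.2, y.2⟩) ?_ ?_ ?_ ?_
  · rintro ⟨f, v, r⟩ hx
    simp only [coe_sigma, Set.mem_sigma_iff, mem_coe, mem_univ, true_and] at hx ⊢
    refine ⟨update_mem_forests hx.1 hx.2, ?_⟩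
    simpa [mem_roots, IsFixedPt] using ne_of_mem_erase_roots hx.2
  · rintro ⟨f, r⟩ hy
    simp only [coe_sigma, Set.mem_sigma_iff, mem_coe, mem_univ, true_and, mem_compl] at hy ⊢
    refine ⟨update_self_mem_forests hy.1 hy.2, mem_erase.2 ⟨?_, by simp [mem_roots, IsFixedPt]⟩⟩
    exact ((mem_forests.1 hy.1).1.root_update_self_apply_ne (mt mem_roots.2 hy.2)).symm
  · rintro ⟨f, v, r⟩ hx
    simp only [coe_sigma, Set.mem_sigma_iff, mem_coe, mem_erase, mem_univ, true_and] at hx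
    simpa [update_idem] using (mem_roots.1 hx.2.2).symm
  · rintro ⟨f, r⟩ -
    simp [update_idem]

theorem card_forests {p : ℕ} (hp : 1 ≤ p) (hpm : p ≤ card α) :
    #(forests α p) = (card α - 1).choose (p - 1) * card α ^ (card α - p) := by
  induction hd : card α - p generalizing p with
  | zero =>
    obtain rfl : p = card α := by omega
    simp [forests_card]
  | succ d ih =>
    obtain ⟨q, rfl⟩ := Nat.exists_eq_add_of_le' hp
    have hrec := card_forests_succ_mul (α := α) (q + 1)
    rw [ih (by omega) (by omega) (by omega)] at hrec
    refine Nat.eq_of_mul_eq_mul_right (show 0 < card α - (q + 1) by omega) (hrec.symm.trans ?_)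
    have hchoose := Nat.choose_succ_right_eq (card α - 1) q
    rw [show card α - 1 - q = card α - (q + 1) by omega] at hchoose
    simp only [Nat.add_sub_cancel, pow_succ]
    calc _ = (card α - 1).choose (q + 1) * (q + 1) * (card α ^ d * card α) := by ring
      _ = _ := by rw [hchoose]; ring

end Count

theorem Finpartition.eq_of_part_eq [Fintype α] [DecidableEq α]
    {P Q : Finpartition (univ : Finset α)} (h : P.part = Q.part) : P = Q := by
  have parts_eq : ∀ R : Finpartition (univ : Finset α), R.parts = univ.image R.part := by
    intro R
    ext θ
    simp only [mem_image, mem_univ, true_and]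
    refine ⟨fun hθ ↦ ?_, by rintro ⟨a, rfl⟩; simp⟩
    obtain ⟨a, -, ha⟩ := R.part_surjOn hθ
    exact ⟨a, ha⟩
  ext1
  rw [parts_eq P, parts_eq Q, h]

section Partition

variable [Fintype α] [DecidableEq α]

def treePartition (f : α → α) : Finpartition (univ : Finset α) :=
  Finpartition.ofSetoid (Setoid.ker (root f))

theorem mem_treePartition_part {f : α → α} {a b : α} :
    b ∈ (treePartition f).part a ↔ root f a = root f b :=
  Finpartition.mem_part_ofSetoid_iff_rel

theorem IsRootedForest.card_treePartition_parts {f : α → α} (hf : IsRootedForest f) :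
    #(treePartition f).parts = #(roots f) := by
  refine (card_bij (fun r _ ↦ (treePartition f).part r) (fun r _ ↦ by simp) ?_ ?_).symm
  · intro r hr r' hr' h
    have : r' ∈ (treePartition f).part r := h ▸ (treePartition f).mem_part (mem_univ r')
    rwa [mem_treePartition_part, root_eq_self_of_isFixedPt (mem_roots.1 hr),
      root_eq_self_of_isFixedPt (mem_roots.1 hr')] at this
  · intro θ hθ
    obtain ⟨a, -, rfl⟩ := (treePartition f).part_surjOn hθ
    refine ⟨root f a, mem_roots.2 (hf.isFixedPt_root a), ?_⟩
    exact (treePartition f).part_eq_of_mem (by simp)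
      (mem_treePartition_part.2 (root_eq_self_of_isFixedPt (hf.isFixedPt_root a)).symm)

variable (P : Finpartition (univ : Finset α))

def restrictPart {f : α → α} (hf : ∀ x, f x ∈ P.part x) (θ : P.parts) : θ.1 → θ.1 :=
  fun z ↦ ⟨f z, by simpa only [P.part_eq_of_mem θ.2 z.2] using hf z⟩

def gluePart (G : ∀ θ : P.parts, θ.1 → θ.1) (x : α) : α :=
  G ⟨P.part x, by simp⟩ ⟨x, by simp⟩

theorem gluePart_of_mem (G : ∀ θ : P.parts, θ.1 → θ.1) {θ : P.parts} (z : θ.1) :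
    gluePart P G z = G θ z := by
  obtain ⟨θ, hθ⟩ := θ
  obtain ⟨z, hz⟩ := z
  obtain rfl := P.part_eq_of_mem hθ hz
  rfl

def partPreservingEquiv : {f : α → α // ∀ x, f x ∈ P.part x} ≃ ∀ θ : P.parts, θ.1 → θ.1 where
  toFun f := restrictPart P f.2
  invFun G := ⟨gluePart P G, fun _ ↦ (G _ _).2⟩
  left_inv _ := rfl
  right_inv G := funext fun _ ↦ funext fun z ↦ Subtype.ext (gluePart_of_mem P G z)

variable {P} {f : α → α}

section Restrict

variable (hf : ∀ x, f x ∈ P.part x)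
include hf

theorem coe_restrictPart_iterate {θ : P.parts} (n : ℕ) (z : θ.1) :
    ((restrictPart P hf θ)^[n] z : α) = f^[n] z := by
  induction n generalizing z with
  | zero => rfl
  | succ n ih => exact ih _

theorem iterate_mem_part (n : ℕ) (x : α) : f^[n] x ∈ P.part x := by
  rw [← coe_restrictPart_iterate hf (θ := ⟨P.part x, by simp⟩) n ⟨x, by simp⟩]
  exact Subtype.prop _

theorem isRootedForest_iff_forall_restrictPart :
    IsRootedForest f ↔ ∀ θ, IsRootedForest (restrictPart P hf θ) := by
  refine ⟨fun hF θ z ↦ ?_, fun h x ↦ ?_⟩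
  · obtain ⟨n, hn⟩ := hF z
    refine ⟨n, Subtype.ext ?_⟩
    rw [← iterate_succ_apply' (restrictPart P hf θ), coe_restrictPart_iterate,
      coe_restrictPart_iterate, iterate_succ_apply']
    exact hn
  · obtain ⟨n, hn⟩ := h ⟨P.part x, by simp⟩ ⟨x, by simp⟩
    refine ⟨n, ?_⟩
    have hn := congrArg Subtype.val hn.eq
    rwa [← iterate_succ_apply' (restrictPart P hf _), coe_restrictPart_iterate,
      coe_restrictPart_iterate, iterate_succ_apply'] at hn

theorem IsRootedForest.coe_root_restrictPart (hF : IsRootedForest f) {θ : P.parts} (z : θ.1) :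
    ((root (restrictPart P hf θ) z : θ.1) : α) = root f z := by
  have hg := (isRootedForest_iff_forall_restrictPart hf).1 hF θ
  have hfix : IsFixedPt f (root (restrictPart P hf θ) z).1 :=
    congrArg Subtype.val (hg.isFixedPt_root z)
  exact (hF.root_eq_of_iterate_eq hfix (coe_restrictPart_iterate hf _ z).symm).symm

theorem restrictPart_mem_forests_one_iff (hF : IsRootedForest f) (θ : P.parts) :
    restrictPart P hf θ ∈ forests θ.1 1 ↔ ∀ x ∈ θ.1, ∀ y ∈ θ.1, root f x = root f y := by
  have hg := (isRootedForest_iff_forall_restrictPart hf).1 hF θ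
  have : Nonempty θ.1 := (P.nonempty_of_mem_parts θ.2).to_subtype
  rw [mem_forests, and_iff_right hg, hg.card_roots_eq_one_iff]
  simp only [Subtype.forall, ← Subtype.coe_inj, hF.coe_root_restrictPart hf]

end Restrict

theorem isRootedForest_and_treePartition_eq_iff :
    IsRootedForest f ∧ treePartition f = P ↔
      ∃ hf : ∀ x, f x ∈ P.part x, ∀ θ, restrictPart P hf θ ∈ forests θ.1 1 := by
  constructor
  · rintro ⟨hF, rfl⟩
    have hf : ∀ x, f x ∈ (treePartition f).part x :=
      fun x ↦ mem_treePartition_part.2 (hF.root_apply x).symm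
    refine ⟨hf, fun θ ↦ (restrictPart_mem_forests_one_iff hf hF θ).2 fun x hx y hy ↦ ?_⟩
    rw [← mem_treePartition_part, (treePartition f).part_eq_of_mem θ.2 hx]
    exact hy
  · rintro ⟨hf, htree⟩
    have hF := (isRootedForest_iff_forall_restrictPart hf).2 fun θ ↦ (mem_forests.1 (htree θ)).1
    have root_eq : ∀ x y, y ∈ P.part x → root f x = root f y := fun x y hy ↦
      (restrictPart_mem_forests_one_iff hf hF ⟨P.part x, by simp⟩).1 (htree _) x (by simp) y hy
    refine ⟨hF, Finpartition.eq_of_part_eq (funext fun x ↦ ext fun y ↦ ?_)⟩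
    rw [mem_treePartition_part]
    refine ⟨fun h ↦ ?_, root_eq x y⟩
    have hxy : P.part y = P.part x := P.eq_of_mem_parts (by simp) (by simp)
      (show root f x ∈ P.part y from h ▸ iterate_mem_part hf _ y) (iterate_mem_part hf _ x)
    exact hxy ▸ P.mem_part (mem_univ y)

open scoped Classical in
theorem card_filter_treePartition_eq :
    #{f : α → α | IsRootedForest f ∧ treePartition f = P} = ∏ θ ∈ P.parts, #θ ^ (#θ - 1) := by
  calc #{f : α → α | IsRootedForest f ∧ treePartition f = P}
      = card {f : α → α // IsRootedForest f ∧ treePartition f = P} := (Fintype.card_subtype _).symm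
    _ = card {f : {f : α → α // ∀ x, f x ∈ P.part x} //
          ∀ θ, restrictPart P f.2 θ ∈ forests θ.1 1} :=
      card_congr ((Equiv.subtypeEquivRight fun _ ↦ isRootedForest_and_treePartition_eq_iff).trans
        (Equiv.subtypeSubtypeEquivSubtypeExists (fun f : α → α ↦ ∀ x, f x ∈ P.part x)
          fun f ↦ ∀ θ, restrictPart P f.2 θ ∈ forests θ.1 1).symm)
    _ = card {G : ∀ θ : P.parts, θ.1 → θ.1 // ∀ θ, G θ ∈ forests θ.1 1} :=
      card_congr (Equiv.subtypeEquiv (partPreservingEquiv P) fun _ ↦ Iff.rfl)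
    _ = ∏ θ : P.parts, card {g : θ.1 → θ.1 // g ∈ forests θ.1 1} := by
      rw [card_congr Equiv.subtypePiEquivPi, Fintype.card_pi]
    _ = ∏ θ ∈ P.parts, #θ ^ (#θ - 1) := by
      rw [← prod_attach P.parts]
      refine prod_congr rfl fun θ _ ↦ ?_
      have hθ : 1 ≤ Fintype.card θ.1 := card_pos_iff.2 (P.nonempty_of_mem_parts θ.2).to_subtype
      rw [card_coe, card_forests le_rfl hθ]
      simp

end Partition

open scoped Classical in
theorem sum_finpartition_prod_card_pow [Fintype α] [DecidableEq α] {p : ℕ} (hp : 1 ≤ p)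
    (hpm : p ≤ card α) :
    ∑ P : Finpartition (univ : Finset α) with #P.parts = p, ∏ θ ∈ P.parts, #θ ^ (#θ - 1)
      = (card α - 1).choose (p - 1) * card α ^ (card α - p) := by
  rw [← card_forests hp hpm, card_eq_sum_card_fiberwise (f := treePartition)
    (t := {P : Finpartition (univ : Finset α) | #P.parts = p}) fun f hf ↦ ?_]
  swap
  · obtain ⟨hF, hcard⟩ := mem_forests.1 hf
    simpa [hF.card_treePartition_parts]
  refine sum_congr rfl fun P hP ↦ ?_
  rw [← card_filter_treePartition_eq]
  congr 1
  ext f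
  simp only [mem_filter, mem_univ, true_and, mem_forests] at hP ⊢
  exact ⟨fun ⟨hF, h⟩ ↦ ⟨⟨hF, by rw [← hF.card_treePartition_parts, h, hP]⟩, h⟩,
    fun ⟨⟨hF, _⟩, h⟩ ↦ ⟨hF, h⟩⟩

open scoped Classical in
theorem sum_filter_isPartition_eq_sum_finpartition [Fintype α] [DecidableEq α] {M : Type*}
    [AddCommMonoid M] (p : ℕ) (g : Finset (Finset α) → M) :
    ∑ Θ ∈ univ.filter (fun Θ : Finset (Finset α) => (∀ θ ∈ Θ, θ.Nonempty) ∧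
        (Θ : Set (Finset α)).PairwiseDisjoint id ∧ Θ.sup id = univ ∧ Θ.card = p), g Θ
      = ∑ P : Finpartition (univ : Finset α) with #P.parts = p, g P.parts := by
  refine (sum_bij (fun P _ ↦ P.parts) (fun P hP ↦ ?_) (fun _ _ _ _ ↦ Finpartition.ext)
    (fun Θ hΘ ↦ ?_) fun _ _ ↦ rfl).symm
  · simp only [mem_filter, mem_univ, true_and] at hP ⊢
    exact ⟨fun θ ↦ P.nonempty_of_mem_parts, P.disjoint, P.sup_parts, hP⟩
  · simp only [mem_filter, mem_univ, true_and] at hΘ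
    obtain ⟨hne, hdisj, hsup, hcard⟩ := hΘ
    exact ⟨⟨Θ, supIndep_iff_pairwiseDisjoint.2 hdisj, hsup, fun h ↦ (hne _ h).ne_empty rfl⟩,
      by simpa using hcard, rfl⟩

open Classical in
/-- For `1 ≤ p ≤ m`, summing over all partitions `Θ` of the `m`-element
set `Fin m` into exactly `p` nonempty blocks,
`Σ_{Θ : |Θ| = p} ∏_{θ ∈ Θ} |θ|^{|θ|-1} = C(m-1, p-1) · m^{m-p}`,
where `C(m-1, p-1) = (m-1)!/((p-1)!(m-p)!)` is the binomial coefficient. -/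
theorem partition_weight_sum_fixed_blocks
    (m p : ℕ) (hp : 1 ≤ p) (hpm : p ≤ m) :
    ∑ Θ ∈ Finset.univ.filter (fun Θ : Finset (Finset (Fin m)) =>
        (∀ θ ∈ Θ, θ.Nonempty) ∧
        (Θ : Set (Finset (Fin m))).PairwiseDisjoint id ∧
        Θ.sup id = Finset.univ ∧
        Θ.card = p),
      ∏ θ ∈ Θ, θ.card ^ (θ.card - 1)
    = Nat.choose (m - 1) (p - 1) * m ^ (m - p) := by
  rw [sum_filter_isPartition_eq_sum_finpartition]
  simpa using sum_finpartition_prod_card_pow (α := Fin m) hp (by simpa using hpm)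
end

section
/- Let a < b be real numbers, let V : ℝ → ℂ be a bounded measurable function with V(t) = 0 for all t outside [a, b], and let k ∈ ℂ with k ≠ 0. Then there exists a unique continuous function X : ℝ → ℂ satisfying the Volterra integral equation X(x) = e^{−ikx} + ∫_{a}^{x} (sin(k(x−t))/k) · V(t) · X(t) dt for all x ∈ ℝ. In particular, X(x) = e^{−ikx} for all x ≤ a. -/
/-!
Write `Φ X (x) = e^{-ikx} + ∫_a^x sin(k(x-t))/k · V(t) X(t) dt`. Since `V` vanishes off `[a, b]`,
`Φ X` depends only on `X|[a,b]`, and there `‖Φ X x - Φ Y x‖ ≤ L ∫_a^x ‖X - Y‖` with `L` a bound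
for `‖V‖` times a bound for the kernel. Iterating, `‖Φⁿ X - Φⁿ Y‖ ≤ (L (b - a))ⁿ / n! · ‖X - Y‖`
on `[a, b]`, so some iterate of `Φ` is a contraction of `C([a, b])`; its fixed point, extended to
`ℝ` by the equation itself, is the unique continuous solution. For `x ≤ a` the integrand vanishes
almost everywhere on `[x, a]`, leaving `e^{-ikx}`.
-/

open MeasureTheory Set Function
open scoped Nat

section VolterraContraction

variable {E : Type*} [NormedAddCommGroup E] {a b L : ℝ}

theorem mul_integral_pow_div_factorial (L a x : ℝ) (n : ℕ) :
    L * ∫ t in a..x, (L * (t - a)) ^ n / n ! = (L * (x - a)) ^ (n + 1) / (n + 1)! := by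
  simp_rw [mul_pow, mul_div_assoc]
  rw [intervalIntegral.integral_const_mul, intervalIntegral.integral_div,
    intervalIntegral.integral_comp_sub_right (· ^ n), integral_pow, Nat.factorial_succ]
  push_cast
  field_simp
  ring

theorem dist_iterate_apply_le_of_dist_le_integral (hab : a ≤ b) (hL : 0 ≤ L)
    {T : C(Icc a b, E) → C(Icc a b, E)}
    (hT : ∀ f g (x : Icc a b), dist (T f x) (T g x) ≤
      L * ∫ t in a..x, dist (IccExtend hab f t) (IccExtend hab g t))
    (n : ℕ) (f g : C(Icc a b, E)) (x : Icc a b) :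
    dist (T^[n] f x) (T^[n] g x) ≤ (L * (x - a)) ^ n / n ! * dist f g := by
  induction n generalizing x with
  | zero => simpa using ContinuousMap.dist_apply_le_dist x
  | succ n ih =>
    rw [iterate_succ_apply', iterate_succ_apply']
    have hcont (h : C(Icc a b, E)) : Continuous (IccExtend hab h) := h.continuous.Icc_extend'
    calc dist (T (T^[n] f) x) (T (T^[n] g) x)
        ≤ L * ∫ t in a..x, dist (IccExtend hab (T^[n] f) t) (IccExtend hab (T^[n] g) t) :=
          hT _ _ x
      _ ≤ L * ∫ t in a..x, (L * (t - a)) ^ n / n ! * dist f g := by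
          gcongr
          refine intervalIntegral.integral_mono_on x.2.1
            (((hcont _).dist (hcont _)).intervalIntegrable _ _)
            ((by fun_prop : Continuous _).intervalIntegrable _ _) fun t ht => ?_
          have htI : t ∈ Icc a b := ⟨ht.1, ht.2.trans x.2.2⟩
          simpa only [IccExtend_of_mem _ _ htI] using ih ⟨t, htI⟩
      _ = (L * (x - a)) ^ (n + 1) / (n + 1)! * dist f g := by
          rw [intervalIntegral.integral_mul_const, ← mul_assoc,
            mul_integral_pow_div_factorial]

theorem existsUnique_isFixedPt_of_dist_le_integral [CompleteSpace E] (hab : a ≤ b)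
    (hL : 0 ≤ L) {T : C(Icc a b, E) → C(Icc a b, E)}
    (hT : ∀ f g (x : Icc a b), dist (T f x) (T g x) ≤
      L * ∫ t in a..x, dist (IccExtend hab f t) (IccExtend hab g t)) :
    ∃! f, IsFixedPt T f := by
  have : Nonempty (Icc a b) := ⟨⟨a, left_mem_Icc.2 hab⟩⟩
  obtain ⟨n, hn⟩ : ∃ n : ℕ, (L * (b - a)) ^ n / n ! < 1 :=
    ((FloorSemiring.tendsto_pow_div_factorial_atTop (L * (b - a))).eventually
      (gt_mem_nhds one_pos)).exists
  have hK : 0 ≤ (L * (b - a)) ^ n / n ! := by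
    have : 0 ≤ b - a := sub_nonneg.2 hab
    positivity
  have hcontr : ContractingWith ⟨_, hK⟩ T^[n] := by
    refine ⟨hn, LipschitzWith.of_dist_le_mul fun f g => ?_⟩
    change dist _ _ ≤ (L * (b - a)) ^ n / n ! * dist f g
    refine (ContinuousMap.dist_le (by positivity)).2 fun x => ?_
    refine (dist_iterate_apply_le_of_dist_le_integral hab hL hT n f g x).trans ?_
    have hxa : 0 ≤ x - a := sub_nonneg.2 x.2.1
    gcongr
    exact x.2.2
  exact ⟨_, hcontr.isFixedPt_fixedPoint_iterate,
    fun f hf => hcontr.fixedPoint_unique (hf.iterate n)⟩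

theorem existsUnique_continuous_fixedPoint_of_dist_le_integral [CompleteSpace E]
    (hab : a ≤ b) (hL : 0 ≤ L) {Φ : (ℝ → E) → ℝ → E}
    (hΦ_cont : ∀ X, Continuous X → Continuous (Φ X))
    (hΦ_local : ∀ X Y, EqOn X Y (Icc a b) → Φ X = Φ Y)
    (hΦ_dist : ∀ X Y, Continuous X → Continuous Y → ∀ x ∈ Icc a b,
      dist (Φ X x) (Φ Y x) ≤ L * ∫ t in a..x, dist (X t) (Y t)) :
    ∃! X, Continuous X ∧ ∀ x, X x = Φ X x := by
  have hext (f : C(Icc a b, E)) : Continuous (IccExtend hab f) := f.continuous.Icc_extend'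
  let T : C(Icc a b, E) → C(Icc a b, E) := fun f =>
    (ContinuousMap.mk _ (hΦ_cont _ (hext f))).restrict (Icc a b)
  obtain ⟨f, hf, hf_unique⟩ := existsUnique_isFixedPt_of_dist_le_integral hab hL
    (T := T) fun f g x => hΦ_dist _ _ (hext f) (hext g) x x.2
  have h_restrict (Y : ℝ → E) (hY : Continuous Y) (hYΦ : ∀ x, Y x = Φ Y x) :
      EqOn Y (IccExtend hab f) (Icc a b) := by
    let g : C(Icc a b, E) := (ContinuousMap.mk Y hY).restrict (Icc a b)
    have hYg : EqOn Y (IccExtend hab g) (Icc a b) := fun x hx =>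
      (IccExtend_of_mem hab g hx).symm
    have hg : IsFixedPt T g := by
      ext x
      exact (congrFun (hΦ_local _ _ hYg) x).symm.trans (hYΦ x).symm
    intro x hx
    rw [hYg hx, hf_unique g hg]
  refine ⟨Φ (IccExtend hab f), ⟨hΦ_cont _ (hext f), fun x => ?_⟩, fun Y ⟨hY, hYΦ⟩ => ?_⟩
  · have hfΦ : EqOn (Φ (IccExtend hab f)) (IccExtend hab f) (Icc a b) := fun y hy =>
      (DFunLike.congr_fun hf ⟨y, hy⟩).trans (IccExtend_of_mem hab f hy).symm
    rw [hΦ_local _ _ hfΦ]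
  · funext x
    rw [hYΦ, hΦ_local _ _ (h_restrict Y hY hYΦ)]

end VolterraContraction

noncomputable def jostOperator (a : ℝ) (V : ℝ → ℂ) (k : ℂ) (X : ℝ → ℂ) (x : ℝ) : ℂ :=
  Complex.exp (-Complex.I * k * (x : ℂ)) +
    ∫ t in a..x, (Complex.sin (k * ((x : ℂ) - (t : ℂ))) / k) * V t * X t

/-- Expanding `sin (k (x - t))` separates the variables, so the integral is a combination of two
primitives with continuous coefficients. -/
theorem continuous_integral_sin_mul_sub_div (a : ℝ) (k : ℂ) {g : ℝ → ℂ}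
    (hg : ∀ u v, IntervalIntegrable g volume u v) :
    Continuous fun x : ℝ => ∫ t in a..x, Complex.sin (k * ((x : ℂ) - (t : ℂ))) / k * g t := by
  have hcos : Continuous fun t : ℝ => Complex.cos (k * t) := by fun_prop
  have hsin : Continuous fun t : ℝ => Complex.sin (k * t) := by fun_prop
  have hintegrable (c : ℝ → ℂ) (hc : Continuous c) (u v : ℝ) :
      IntervalIntegrable (fun t => c t * g t) volume u v :=
    (hg u v).continuousOn_mul hc.continuousOn
  have hsplit (x : ℝ) : ∫ t in a..x, Complex.sin (k * ((x : ℂ) - (t : ℂ))) / k * g t =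
      Complex.sin (k * x) / k * (∫ t in a..x, Complex.cos (k * t) * g t) -
        Complex.cos (k * x) / k * ∫ t in a..x, Complex.sin (k * t) * g t := by
    rw [← intervalIntegral.integral_const_mul, ← intervalIntegral.integral_const_mul,
      ← intervalIntegral.integral_sub ((hintegrable _ hcos a x).const_mul _)
        ((hintegrable _ hsin a x).const_mul _)]
    congr 1 with t
    rw [mul_sub, Complex.sin_sub]
    ring
  simp_rw [hsplit]
  have := intervalIntegral.continuous_primitive (hintegrable _ hcos) a
  have := intervalIntegral.continuous_primitive (hintegrable _ hsin) a
  fun_prop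

variable {a b C M : ℝ} {V : ℝ → ℂ} {k : ℂ} {X Y : ℝ → ℂ}

theorem continuous_jostOperator (hV : ∀ u v, IntervalIntegrable V volume u v)
    (hX : Continuous X) : Continuous (jostOperator a V k X) := by
  unfold jostOperator
  simp_rw [mul_assoc (Complex.sin _ / k)]
  exact (by fun_prop : Continuous fun x : ℝ => Complex.exp (-Complex.I * k * x)).add
    (continuous_integral_sin_mul_sub_div a k fun u v =>
      (hV u v).mul_continuousOn hX.continuousOn)

theorem jostOperator_congr (hV : ∀ t ∉ Icc a b, V t = 0) (h : EqOn X Y (Icc a b)) :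
    jostOperator a V k X = jostOperator a V k Y := by
  have hVXY (t : ℝ) : V t * X t = V t * Y t := by
    by_cases ht : t ∈ Icc a b
    · rw [h ht]
    · rw [hV t ht, zero_mul, zero_mul]
  unfold jostOperator
  simp_rw [mul_assoc (Complex.sin _ / k), hVXY]

theorem jostOperator_of_le (hV : ∀ t < a, V t = 0) {x : ℝ} (hx : x ≤ a) :
    jostOperator a V k X x = Complex.exp (-Complex.I * k * (x : ℂ)) := by
  rw [jostOperator, intervalIntegral.integral_symm, intervalIntegral.integral_of_le hx,
    integral_Ioc_eq_integral_Ioo,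
    setIntegral_eq_zero_of_forall_eq_zero fun t ht => by rw [hV t ht.2, mul_zero, zero_mul],
    neg_zero, add_zero]

theorem dist_jostOperator_le (hV : ∀ u v, IntervalIntegrable V volume u v)
    (hC : ∀ t, ‖V t‖ ≤ C) (hM : ∀ s ∈ Icc 0 (b - a), ‖Complex.sin (k * s) / k‖ ≤ M)
    (hX : Continuous X) (hY : Continuous Y) {x : ℝ} (hx : x ∈ Icc a b) :
    dist (jostOperator a V k X x) (jostOperator a V k Y x) ≤
      M * C * ∫ t in a..x, dist (X t) (Y t) := by
  have hkernel : Continuous fun t : ℝ => Complex.sin (k * ((x : ℂ) - (t : ℂ))) / k := by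
    fun_prop
  have hintegrable (Z : ℝ → ℂ) (hZ : Continuous Z) : IntervalIntegrable
      (fun t => Complex.sin (k * ((x : ℂ) - (t : ℂ))) / k * V t * Z t) volume a x :=
    ((hV a x).continuousOn_mul hkernel.continuousOn).mul_continuousOn hZ.continuousOn
  rw [dist_eq_norm, jostOperator, jostOperator, add_sub_add_left_eq_sub,
    ← intervalIntegral.integral_sub (hintegrable X hX) (hintegrable Y hY),
    ← intervalIntegral.integral_const_mul]
  refine intervalIntegral.norm_integral_le_of_norm_le hx.1 (ae_of_all _ fun t ht => ?_)
    ((by fun_prop : Continuous fun t => M * C * dist (X t) (Y t)).intervalIntegrable _ _)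
  have hker : ‖Complex.sin (k * ((x : ℂ) - (t : ℂ))) / k‖ ≤ M := by
    simpa using hM (x - t) ⟨by linarith [ht.2], by linarith [ht.1, hx.2]⟩
  rw [← mul_sub, norm_mul, norm_mul, dist_eq_norm]
  gcongr
  · exact (norm_nonneg _).trans hker
  · exact hC t

theorem volterra_jost_solution_exists_unique_general
    (a b : ℝ) (hab : a < b) (V : ℝ → ℂ) (hVmeas : Measurable V)
    (hVbdd : ∃ C : ℝ, ∀ t : ℝ, ‖V t‖ ≤ C)
    (hVsupp : ∀ t : ℝ, t ∉ Set.Icc a b → V t = 0)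
    (k : ℂ) :
    (∃! X : ℝ → ℂ, Continuous X ∧
      ∀ x : ℝ, X x = Complex.exp (-Complex.I * k * (x : ℂ)) +
        ∫ t in a..x, (Complex.sin (k * ((x : ℂ) - (t : ℂ))) / k) * V t * X t) ∧
    ∀ X : ℝ → ℂ,
      (Continuous X ∧
        ∀ x : ℝ, X x = Complex.exp (-Complex.I * k * (x : ℂ)) +
          ∫ t in a..x, (Complex.sin (k * ((x : ℂ) - (t : ℂ))) / k) * V t * X t) →
      ∀ x : ℝ, x ≤ a → X x = Complex.exp (-Complex.I * k * (x : ℂ)) := by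
  obtain ⟨C, hC⟩ := hVbdd
  have hC0 : 0 ≤ C := (norm_nonneg _).trans (hC a)
  have hV (u v : ℝ) : IntervalIntegrable V volume u v :=
    intervalIntegrable_const.mono_fun' hVmeas.aestronglyMeasurable (ae_of_all _ hC)
  obtain ⟨M, hM⟩ := isCompact_Icc.exists_bound_of_continuousOn
    (f := fun s : ℝ => Complex.sin (k * s) / k) (s := Icc 0 (b - a)) (by fun_prop)
  have hM0 : 0 ≤ M := (norm_nonneg _).trans (hM 0 ⟨le_rfl, by linarith⟩)
  refine ⟨existsUnique_continuous_fixedPoint_of_dist_le_integral hab.le (mul_nonneg hM0 hC0)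
    (fun X hX => continuous_jostOperator hV hX) (fun X Y => jostOperator_congr hVsupp)
    (fun X Y hX hY x hx => dist_jostOperator_le hV hC hM hX hY hx), ?_⟩
  rintro X ⟨-, hX⟩ x hxa
  exact (hX x).trans <| jostOperator_of_le (fun t hta => hVsupp t fun ht => hta.not_ge ht.1) hxa

/-- For a bounded measurable potential `V` vanishing outside `[a, b]`
and `k ≠ 0`, the Volterra integral equation
`X(x) = e^{-ikx} + ∫_a^x (sin(k(x-t))/k) V(t) X(t) dt`
has a unique continuous solution `X : ℝ → ℂ`; moreover any such solution satisfies
`X(x) = e^{-ikx}` for all `x ≤ a`. -/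
theorem volterra_jost_solution_exists_unique
    (a b : ℝ) (hab : a < b) (V : ℝ → ℂ) (hVmeas : Measurable V)
    (hVbdd : ∃ C : ℝ, ∀ t : ℝ, ‖V t‖ ≤ C)
    (hVsupp : ∀ t : ℝ, t ∉ Set.Icc a b → V t = 0)
    (k : ℂ) (hk : k ≠ 0) :
    (∃! X : ℝ → ℂ, Continuous X ∧
      ∀ x : ℝ, X x = Complex.exp (-Complex.I * k * (x : ℂ)) +
        ∫ t in a..x, (Complex.sin (k * ((x : ℂ) - (t : ℂ))) / k) * V t * X t) ∧
    ∀ X : ℝ → ℂ,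
      (Continuous X ∧
        ∀ x : ℝ, X x = Complex.exp (-Complex.I * k * (x : ℂ)) +
          ∫ t in a..x, (Complex.sin (k * ((x : ℂ) - (t : ℂ))) / k) * V t * X t) →
      ∀ x : ℝ, x ≤ a → X x = Complex.exp (-Complex.I * k * (x : ℂ)) :=
  volterra_jost_solution_exists_unique_general a b hab V hVmeas hVbdd hVsupp k
end

section
/- Let d₋, d₊ > 0, ℓ > 0, and k ∈ ℂ with k ≠ 0. Let V₋, V₊ : ℝ → ℂ be continuous functions with V₋(x) = 0 outside [−d₋, 0] and V₊(x) = 0 outside [0, d₊]. Suppose X₋, X₊, X̃₊ : ℝ → ℂ are twice continuously differentiable functions satisfying: −X₋″ + V₋·X₋ = k²·X₋ on ℝ with X₋(x) = e^{−ikx} for x ≤ −d₋; −X₊″ + V₊·X₊ = k²·X₊ on ℝ with X₊(x) = e^{−ikx} for x ≤ 0; and −X̃₊″ + V₊·X̃₊ = (−k)²·X̃₊ on ℝ with X̃₊(x) = e^{ikx} for x ≤ 0. Assume X₋′(0) + ik·X₋(0) ≠ 0 and X̃₊′(d₊) − ik·X̃₊(d₊) ≠ 0, and define F(k) := [(X₋′(0)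 − ik·X₋(0))/(X₋′(0) + ik·X₋(0))] · [(X₊′(d₊) − ik·X₊(d₊))/(X̃₊′(d₊) − ik·X̃₊(d₊))]. If e^{4ikℓ} = F(k), then there exist a function ψ : ℝ → ℂ, not identically zero, twice continuously differentiable, and constants C₋, C₊ ∈ ℂ such that −ψ″(x) + (V₊(x−ℓ) + V₋(x+ℓ))·ψ(x) = k²·ψ(x) for all x ∈ ℝ, ψ(x) = C₋·e^{−ikx} for all x ≤ −ℓ−d₋, and ψ(x) = C₊·e^{ikx} for all x ≥ ℓ+d₊. -/
/-!
Between the wells the potential vanishes, so there `X₋(x + ℓ)` and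
`Y(x - ℓ) := X₊(x - ℓ) - c X̃₊(x - ℓ)` are combinations of `e^{±ikx}`. The constant
`c = (X₊' - ikX₊)(d₊) / (X̃₊' - ikX̃₊)(d₊)` kills the incoming part `e^{-ikx}` of `Y` to the right
of `d₊`, where `Y' - ikY` satisfies a first-order linear equation and vanishes at `d₊`.
Writing both functions out on `[-ℓ, ℓ]`, they are proportional when `e^{4ikℓ} = F(k)`;
gluing `X₋(x + ℓ)` with the matching multiple of `Y(x - ℓ)` gives `ψ`, which is outgoing on
both sides.
-/

open Complex Set Topology

theorem Continuous.eq_zero_of_forall_gt {E : Type*} [TopologicalSpace E] [Zero E] [T2Space E]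
    {f : ℝ → E} (hf : Continuous f) {a : ℝ} (h : ∀ x, a < x → f x = 0) :
    ∀ x, a ≤ x → f x = 0 := fun _ hx =>
  EqOn.of_subset_closure (s := Ioi a) (t := Ici a) (g := 0) h hf.continuousOn
    continuousOn_const Ioi_subset_Ici_self (closure_Ioi a).ge hx

theorem eq_mul_exp_of_hasDerivAt {u : ℝ → ℂ} {c : ℂ} {x₀ : ℝ}
    (hu : ∀ x, x₀ ≤ x → HasDerivAt u (c * u x) x) (x : ℝ) (hx : x₀ ≤ x) :
    u x = u x₀ * exp (c * (x - x₀)) := by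
  set v : ℝ → ℂ := fun y => u y * exp (-c * (y - x₀))
  have hv : ∀ y, x₀ ≤ y → HasDerivAt v 0 y := fun y hy => by
    have hlin : HasDerivAt (fun y : ℝ => -c * ((y : ℂ) - x₀)) (-c) y := by
      simpa using ((ofRealCLM.hasDerivAt (x := y)).sub_const (x₀ : ℂ)).const_mul (-c)
    exact ((hu y hy).mul hlin.cexp).congr_deriv (by ring)
  have hconst : v x = v x₀ :=
    constant_of_has_deriv_right_zero (fun y hy => (hv y hy.1).continuousAt.continuousWithinAt)
      (fun y hy => (hv y hy.1).hasDerivWithinAt) x (right_mem_Icc.2 hx)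
  simp only [v, sub_self, mul_zero, exp_zero, mul_one] at hconst
  rw [← hconst, mul_assoc, ← exp_add]
  simp

section FreeEquation

variable {f : ℝ → ℂ} {κ : ℂ} {x₀ : ℝ}

theorem deriv_sub_mul_eq_mul_exp (hf : ContDiff ℝ 2 f)
    (hode : ∀ x, x₀ ≤ x → iteratedDeriv 2 f x = κ ^ 2 * f x) (x : ℝ) (hx : x₀ ≤ x) :
    deriv f x - κ * f x = (deriv f x₀ - κ * f x₀) * exp (-κ * (x - x₀)) := by
  have hf' : Differentiable ℝ (deriv f) := by
    simpa using hf.differentiable_iteratedDeriv' 1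
  refine eq_mul_exp_of_hasDerivAt (u := fun y => deriv f y - κ * f y) (fun y hy => ?_) x hx
  have hf'' : HasDerivAt (deriv f) (κ ^ 2 * f y) y := by
    rw [← hode y hy, iteratedDeriv_succ, iteratedDeriv_one]
    exact (hf' y).hasDerivAt
  exact (hf''.sub (((hf.differentiable two_ne_zero) y).hasDerivAt.const_mul κ)).congr_deriv
    (by ring)

theorem two_mul_mul_eq_of_iteratedDeriv_two_eq (hf : ContDiff ℝ 2 f)
    (hode : ∀ x, x₀ ≤ x → iteratedDeriv 2 f x = κ ^ 2 * f x) (x : ℝ) (hx : x₀ ≤ x) :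
    2 * κ * f x = (deriv f x₀ + κ * f x₀) * exp (κ * (x - x₀)) -
      (deriv f x₀ - κ * f x₀) * exp (-κ * (x - x₀)) := by
  have hplus := deriv_sub_mul_eq_mul_exp (κ := -κ) hf (by simpa only [neg_sq] using hode) x hx
  have hminus := deriv_sub_mul_eq_mul_exp hf hode x hx
  simp only [neg_mul, sub_neg_eq_add, neg_neg] at hplus hminus ⊢
  linear_combination hplus - hminus

theorem eq_mul_exp_of_deriv_eq_mul (hf : ContDiff ℝ 2 f)
    (hode : ∀ x, x₀ ≤ x → iteratedDeriv 2 f x = κ ^ 2 * f x) (h₀ : deriv f x₀ = κ * f x₀)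
    (x : ℝ) (hx : x₀ ≤ x) :
    f x = f x₀ * exp (κ * (x - x₀)) := by
  refine eq_mul_exp_of_hasDerivAt (fun y hy => ?_) x hx
  have hy' := deriv_sub_mul_eq_mul_exp hf hode y hy
  rw [h₀, sub_self, zero_mul, sub_eq_zero] at hy'
  rw [← hy']
  exact ((hf.differentiable two_ne_zero) y).hasDerivAt

end FreeEquation

def SolvesSchrodingerOn (V : ℝ → ℂ) (k : ℂ) (s : Set ℝ) (f : ℝ → ℂ) : Prop :=
  ∀ x ∈ s, -(iteratedDeriv 2 f x) + V x * f x = k ^ 2 * f x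

namespace SolvesSchrodingerOn

variable {V W : ℝ → ℂ} {k : ℂ} {s t : Set ℝ} {f g : ℝ → ℂ}

theorem mono (h : SolvesSchrodingerOn V k t f) (hst : s ⊆ t) : SolvesSchrodingerOn V k s f :=
  fun x hx => h x (hst hx)

theorem congr_potential (h : SolvesSchrodingerOn V k s f) (hVW : ∀ x ∈ s, V x = W x) :
    SolvesSchrodingerOn W k s f :=
  fun x hx => by rw [← hVW x hx]; exact h x hx

theorem const_mul (h : SolvesSchrodingerOn V k s f) (c : ℂ) :
    SolvesSchrodingerOn V k s (fun x => c * f x) := fun x hx => by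
  rw [iteratedDeriv_const_mul_field]
  linear_combination c * h x hx

theorem sub (hf : SolvesSchrodingerOn V k s f) (hg : SolvesSchrodingerOn V k s g)
    (hf₂ : ContDiff ℝ 2 f) (hg₂ : ContDiff ℝ 2 g) :
    SolvesSchrodingerOn V k s (fun x => f x - g x) := fun x hx => by
  rw [iteratedDeriv_fun_sub hf₂.contDiffAt hg₂.contDiffAt]
  linear_combination hf x hx - hg x hx

theorem comp_add_const (h : SolvesSchrodingerOn V k s f) (a : ℝ) :
    SolvesSchrodingerOn (fun x => V (x + a)) k ((· + a) ⁻¹' s) (fun x => f (x + a)) :=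
  fun x hx => by rw [iteratedDeriv_comp_add_const]; exact h (x + a) hx

theorem comp_sub_const (h : SolvesSchrodingerOn V k s f) (a : ℝ) :
    SolvesSchrodingerOn (fun x => V (x - a)) k ((· - a) ⁻¹' s) (fun x => f (x - a)) :=
  fun x hx => by rw [iteratedDeriv_comp_sub_const]; exact h (x - a) hx

theorem iteratedDeriv_two_eq (h : SolvesSchrodingerOn 0 k s f) (x : ℝ) (hx : x ∈ s) :
    iteratedDeriv 2 f x = (I * k) ^ 2 * f x := by
  have hfx := h x hx
  rw [Pi.zero_apply, zero_mul, add_zero] at hfx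
  linear_combination -hfx - k ^ 2 * f x * I_sq

theorem zero_Ici_of_support {a b : ℝ}
    (h : SolvesSchrodingerOn V k univ f) (hV : Continuous V) (hsupp : ∀ x ∉ Icc a b, V x = 0) :
    SolvesSchrodingerOn 0 k (Ici b) f :=
  (h.mono (subset_univ _)).congr_potential
    (hV.eq_zero_of_forall_gt fun x hx => hsupp x fun hx' => hx.not_ge hx'.2)

end SolvesSchrodingerOn

theorem exists_solvesSchrodingerOn_univ_of_eqOn_Ioo {V f g : ℝ → ℂ} {k : ℂ} {a b : ℝ}
    (hab : a < b) (hfg : EqOn f g (Ioo a b)) (hf : ContDiff ℝ 2 f) (hg : ContDiff ℝ 2 g)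
    (hfV : SolvesSchrodingerOn V k (Iio b) f) (hgV : SolvesSchrodingerOn V k (Ioi a) g) :
    ∃ ψ : ℝ → ℂ, ContDiff ℝ 2 ψ ∧ SolvesSchrodingerOn V k univ ψ ∧
      EqOn ψ f (Iio b) ∧ EqOn ψ g (Ioi a) := by
  set ψ := (Iio b).piecewise f g
  have hψf : EqOn ψ f (Iio b) := piecewise_eqOn _ _ _
  have hψg : EqOn ψ g (Ioi a) := fun x (hx : a < x) => by
    by_cases hxb : x < b
    · rw [hψf hxb]; exact hfg ⟨hx, hxb⟩
    · exact piecewise_eq_of_notMem _ _ _ hxb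
  have hlocal : ∀ x, (x < b ∧ ψ =ᶠ[𝓝 x] f) ∨ (a < x ∧ ψ =ᶠ[𝓝 x] g) := fun x =>
    (lt_or_ge x b).imp (fun hx => ⟨hx, hψf.eventuallyEq_of_mem (Iio_mem_nhds hx)⟩)
      (fun hx => ⟨hab.trans_le hx, hψg.eventuallyEq_of_mem (Ioi_mem_nhds (hab.trans_le hx))⟩)
  refine ⟨ψ, contDiff_iff_contDiffAt.2 fun x => ?_, fun x _ => ?_, hψf, hψg⟩
  · rcases hlocal x with ⟨-, hx⟩ | ⟨-, hx⟩
    · exact hf.contDiffAt.congr_of_eventuallyEq hx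
    · exact hg.contDiffAt.congr_of_eventuallyEq hx
  · rcases hlocal x with ⟨hxb, hx⟩ | ⟨hax, hx⟩
    · rw [hx.iteratedDeriv_eq, hx.eq_of_nhds]; exact hfV x hxb
    · rw [hx.iteratedDeriv_eq, hx.eq_of_nhds]; exact hgV x hax

theorem exists_solvesSchrodingerOn_two_centers {Vm Vp L R : ℝ → ℂ} {k : ℂ} {ℓ : ℝ} (hℓ : 0 < ℓ)
    (hVm : ∀ x, 0 < x → Vm x = 0) (hVp : ∀ x, x < 0 → Vp x = 0)
    (hL : ContDiff ℝ 2 L) (hR : ContDiff ℝ 2 R)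
    (hLV : SolvesSchrodingerOn Vm k univ L) (hRV : SolvesSchrodingerOn Vp k univ R)
    (hLR : EqOn (fun x => L (x + ℓ)) (fun x => R (x - ℓ)) (Ioo (-ℓ) ℓ)) :
    ∃ ψ : ℝ → ℂ, ContDiff ℝ 2 ψ ∧
      SolvesSchrodingerOn (fun x => Vp (x - ℓ) + Vm (x + ℓ)) k univ ψ ∧
      EqOn ψ (fun x => L (x + ℓ)) (Iio ℓ) ∧ EqOn ψ (fun x => R (x - ℓ)) (Ioi (-ℓ)) :=
  exists_solvesSchrodingerOn_univ_of_eqOn_Ioo (neg_lt_self hℓ) hLR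
    (hL.comp (contDiff_id.add contDiff_const)) (hR.comp (contDiff_id.sub contDiff_const))
    (((hLV.comp_add_const ℓ).mono (subset_univ _)).congr_potential fun x (hx : x < ℓ) => by
      rw [hVp (x - ℓ) (sub_neg.2 hx), zero_add])
    (((hRV.comp_sub_const ℓ).mono (subset_univ _)).congr_potential fun x (hx : -ℓ < x) => by
      rw [hVm (x + ℓ) (by linarith), add_zero])

theorem sub_const_mul_eq_mul_exp {k c : ℂ} {d : ℝ} {f g : ℝ → ℂ}
    (hf : ContDiff ℝ 2 f) (hg : ContDiff ℝ 2 g)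
    (hfV : SolvesSchrodingerOn 0 k (Ici d) f) (hgV : SolvesSchrodingerOn 0 k (Ici d) g)
    (hc : deriv f d - I * k * f d = c * (deriv g d - I * k * g d)) (x : ℝ) (hx : d ≤ x) :
    f x - c * g x = (f d - c * g d) * exp (I * k * (x - d)) := by
  have hcg : ContDiff ℝ 2 (fun x => c * g x) := contDiff_const.mul hg
  have hY := hfV.sub (hgV.const_mul c) hf hcg
  refine eq_mul_exp_of_deriv_eq_mul (hf.sub hcg) (fun y hy => hY.iteratedDeriv_two_eq y hy) ?_ x hx
  rw [deriv_fun_sub (hf.differentiable two_ne_zero d) (hcg.differentiable two_ne_zero d),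
    deriv_const_mul c (hg.differentiable two_ne_zero d)]
  linear_combination hc

-- The factor is read off from the coefficients of `e^{-ikx}`; those of `e^{ikx}` then agree
-- by `heq`.
theorem eqOn_Icc_comp_add_const_of_exp_mul_eq {Xm Y : ℝ → ℂ} {k P M c : ℂ} {ℓ : ℝ} (hk : k ≠ 0)
    (hXm : ∀ t, 0 ≤ t → 2 * (I * k) * Xm t = P * exp (I * k * t) - M * exp (-(I * k) * t))
    (hY : ∀ t, t ≤ 0 → Y t = exp (-I * k * t) - c * exp (I * k * t))
    (heq : P * exp (4 * I * k * ℓ) = M * c) :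
    EqOn (fun x => Xm (x + ℓ)) (fun x => -M * exp (-2 * I * k * ℓ) / (2 * I * k) * Y (x - ℓ))
      (Icc (-ℓ) ℓ) := fun x ⟨hxl, hxr⟩ => by
  have hexp : exp (I * k * ↑(x + ℓ)) = exp (4 * I * k * ℓ) * exp (I * k * ↑(x - ℓ)) *
      exp (-2 * I * k * ℓ) := by
    rw [← exp_add, ← exp_add]; push_cast; ring_nf
  have hexp' : exp (-(I * k) * ↑(x + ℓ)) = exp (-I * k * ↑(x - ℓ)) * exp (-2 * I * k * ℓ) := by
    rw [← exp_add]; push_cast; ring_nf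
  have hm := hXm (x + ℓ) (by linarith)
  rw [hexp, hexp'] at hm
  dsimp only
  rw [hY (x - ℓ) (by linarith)]
  generalize exp (-2 * I * k * ℓ) = E, exp (I * k * ↑(x - ℓ)) = E₁,
    exp (-I * k * ↑(x - ℓ)) = E₂ at hm ⊢
  field_simp
  linear_combination hm + E₁ * E * heq

/-- Let `V₋, V₊` be continuous potentials supported in `[-d₋, 0]` and
`[0, d₊]`, and let `X₋, X₊, X̃₊` be the Jost-type solutions of the corresponding
Schrödinger equations (the first two for wavenumber `k`, equal to `e^{-ikx}` to the left
of the supports, and the third for wavenumber `-k`, equal to `e^{ikx}` to the left of the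
support). If `e^{4ikℓ} = F(k)`, where
`F(k) = [(X₋'(0) - ik X₋(0))/(X₋'(0) + ik X₋(0))] ·
        [(X₊'(d₊) - ik X₊(d₊))/(X̃₊'(d₊) - ik X̃₊(d₊))]`,
then the bipartite Schrödinger equation with potential `V₊(x-ℓ) + V₋(x+ℓ)` possesses a
nontrivial solution `ψ` which behaves as `C₋ e^{-ikx}` for `x ≤ -ℓ-d₋` and as
`C₊ e^{ikx}` for `x ≥ ℓ+d₊`, i.e. `k` corresponds to a resonance or an eigenvalue. -/
theorem exp_eq_F_implies_resonance_or_eigenvalue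
    (dm dp ℓ : ℝ) (hdm : 0 < dm) (hdp : 0 < dp) (hℓ : 0 < ℓ)
    (k : ℂ) (hk : k ≠ 0)
    (Vm Vp : ℝ → ℂ) (hVmc : Continuous Vm) (hVpc : Continuous Vp)
    (hVmsupp : ∀ x : ℝ, x ∉ Set.Icc (-dm) 0 → Vm x = 0)
    (hVpsupp : ∀ x : ℝ, x ∉ Set.Icc 0 dp → Vp x = 0)
    (Xm Xp Xt : ℝ → ℂ)
    (hXm : ContDiff ℝ 2 Xm) (hXp : ContDiff ℝ 2 Xp) (hXt : ContDiff ℝ 2 Xt)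
    (hXmeq : ∀ x : ℝ, -(iteratedDeriv 2 Xm x) + Vm x * Xm x = k ^ 2 * Xm x)
    (hXmval : ∀ x : ℝ, x ≤ -dm → Xm x = Complex.exp (-Complex.I * k * (x : ℂ)))
    (hXpeq : ∀ x : ℝ, -(iteratedDeriv 2 Xp x) + Vp x * Xp x = k ^ 2 * Xp x)
    (hXpval : ∀ x : ℝ, x ≤ 0 → Xp x = Complex.exp (-Complex.I * k * (x : ℂ)))
    (hXteq : ∀ x : ℝ, -(iteratedDeriv 2 Xt x) + Vp x * Xt x = (-k) ^ 2 * Xt x)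
    (hXtval : ∀ x : ℝ, x ≤ 0 → Xt x = Complex.exp (Complex.I * k * (x : ℂ)))
    (hden1 : deriv Xm 0 + Complex.I * k * Xm 0 ≠ 0)
    (hden2 : deriv Xt dp - Complex.I * k * Xt dp ≠ 0)
    (heq : Complex.exp (4 * Complex.I * k * (ℓ : ℂ)) =
      ((deriv Xm 0 - Complex.I * k * Xm 0) / (deriv Xm 0 + Complex.I * k * Xm 0)) *
      ((deriv Xp dp - Complex.I * k * Xp dp) / (deriv Xt dp - Complex.I * k * Xt dp))) :
    ∃ (ψ : ℝ → ℂ) (Cm Cp : ℂ),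
      (∃ x : ℝ, ψ x ≠ 0) ∧ ContDiff ℝ 2 ψ ∧
      (∀ x : ℝ, -(iteratedDeriv 2 ψ x) + (Vp (x - ℓ) + Vm (x + ℓ)) * ψ x = k ^ 2 * ψ x) ∧
      (∀ x : ℝ, x ≤ -ℓ - dm → ψ x = Cm * Complex.exp (-Complex.I * k * (x : ℂ))) ∧
      (∀ x : ℝ, ℓ + dp ≤ x → ψ x = Cp * Complex.exp (Complex.I * k * (x : ℂ))) := by
  have hXmV : SolvesSchrodingerOn Vm k univ Xm := fun x _ => hXmeq x
  have hXpV : SolvesSchrodingerOn Vp k univ Xp := fun x _ => hXpeq x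
  have hXtV : SolvesSchrodingerOn Vp k univ Xt := fun x _ => by rw [← neg_sq]; exact hXteq x
  have hXm_free : ∀ t : ℝ, 0 ≤ t → 2 * (I * k) * Xm t = (deriv Xm 0 + I * k * Xm 0) *
      exp (I * k * t) - (deriv Xm 0 - I * k * Xm 0) * exp (-(I * k) * t) := fun t ht => by
    simpa using two_mul_mul_eq_of_iteratedDeriv_two_eq hXm
      (hXmV.zero_Ici_of_support hVmc hVmsupp).iteratedDeriv_two_eq t ht
  set c := (deriv Xp dp - I * k * Xp dp) / (deriv Xt dp - I * k * Xt dp)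
  have hY_left : ∀ t : ℝ, t ≤ 0 → Xp t - c * Xt t = exp (-I * k * t) - c * exp (I * k * t) :=
    fun t ht => by rw [hXpval t ht, hXtval t ht]
  have hY_right := sub_const_mul_eq_mul_exp (c := c) hXp hXt
    (hXpV.zero_Ici_of_support hVpc hVpsupp) (hXtV.zero_Ici_of_support hVpc hVpsupp)
    (div_mul_cancel₀ _ hden2).symm
  set lam := -(deriv Xm 0 - I * k * Xm 0) * exp (-2 * I * k * ℓ) / (2 * I * k)
  obtain ⟨ψ, hψ, hψV, hψl, hψr⟩ := exists_solvesSchrodingerOn_two_centers hℓ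
    (fun x hx => hVmsupp x fun h => hx.not_ge h.2) (fun x hx => hVpsupp x fun h => hx.not_ge h.1)
    hXm (contDiff_const.mul (hXp.sub (contDiff_const.mul hXt))) hXmV
    ((hXpV.sub (hXtV.const_mul c) hXp (contDiff_const.mul hXt)).const_mul lam)
    ((eqOn_Icc_comp_add_const_of_exp_mul_eq hk hXm_free hY_left (by rw [heq]; field_simp)).mono
      Ioo_subset_Icc_self)
  have hψ_left : ∀ x : ℝ, x ≤ -ℓ - dm → ψ x = exp (-I * k * ℓ) * exp (-I * k * x) := fun x hx => by
    rw [hψl (show x < ℓ by linarith)]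
    dsimp only
    rw [hXmval (x + ℓ) (by linarith), ← exp_add]
    push_cast; ring_nf
  refine ⟨ψ, exp (-I * k * ℓ), lam * (Xp dp - c * Xt dp) * exp (-I * k * (ℓ + dp)),
    ⟨-ℓ - dm, by rw [hψ_left _ le_rfl]; exact mul_ne_zero (exp_ne_zero _) (exp_ne_zero _)⟩,
    hψ, fun x => hψV x trivial, hψ_left, fun x hx => ?_⟩
  rw [hψr (show -ℓ < x by linarith)]
  dsimp only
  rw [hY_right (x - ℓ) (by linarith), mul_assoc _ (exp _) (exp _), ← exp_add, mul_assoc]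
  push_cast; ring_nf
end
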